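/- arXiv:math/0604477 — 9 statements merged into one kernel-verified Lean document; each statement's English description precedes it below -/
import Mathlib

section
/- Let (x^[i])_{i≥0} be a δ-descent in A (not necessarily iterative). Then the nil algebra of δ decomposes as internal direct sums of K-subspaces N(δ,A) = ⊕_{i≥0} A^δ·x^[i] = ⊕_{i≥0} x^[i]·A^δ, and for every n ≥ 0 one has N_n = ⊕_{i=0}^{n} A^δ·x^[i] = ⊕_{i=0}^{n} x^[i]·A^δ. -/
/-!
For `c ∈ ker δ` one has `δ^i (c * x^[i]) = c` while `δ^m (c * x^[i]) = 0` for `i < m`. Hence an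
element `a ∈ ker δ^(n+2)` splits as `(δ^(n+1) a) * x^[n+1]` plus an element of `ker δ^(n+1)`,
which gives the filtration `N_n = ∑_{i ≤ n} A^δ x^[i]` by induction; and `δ^(n+1)` recovers `c`
from `c * x^[n+1]`, so `A^δ x^[n+1]` meets `N_n` trivially, which in a modular lattice makes the
sum direct. Only these two identities are used, and they hold equally for `c ↦ x^[i] * c`.
-/

open LinearMap

theorem iSupIndep_of_disjoint_partialSups {α : Type*} [CompleteLattice α] [IsModularLattice α]
    [IsCompactlyGenerated α] {f : ℕ → α} (h : ∀ n, Disjoint (partialSups f n) (f (n + 1))) :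
    iSupIndep f := by
  have hrange : ∀ n, (Finset.range n).SupIndep f := by
    intro n
    induction n with
    | zero => simp
    | succ n ih =>
      rw [Finset.range_add_one]
      refine ih.insert ?_
      cases n with
      | zero => simp
      | succ n => simpa [← partialSups_eq_sup_range] using (h n).symm
  refine iSupIndep_iff_supIndep.mpr fun s => (hrange (s.sup id + 1)).subset fun i hi => ?_
  simpa [Nat.lt_succ_iff] using Finset.le_sup (f := id) hi

section Descent

variable {R M : Type*} [Ring R] [AddCommGroup M] [Module R M]
  {δ : Module.End R M} {L : ℕ → Module.End R M}

theorem pow_apply_add_of_descent (hL : ∀ i, ∀ c ∈ ker δ, δ (L (i + 1) c) = L i c)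
    {c : M} (hc : c ∈ ker δ) (i k : ℕ) : (δ ^ k) (L (i + k) c) = L i c := by
  induction k with
  | zero => rfl
  | succ k ih => rw [pow_succ, Module.End.mul_apply, ← add_assoc, hL _ c hc, ih]

variable (hL0 : ∀ c ∈ ker δ, L 0 c = c) (hL : ∀ i, ∀ c ∈ ker δ, δ (L (i + 1) c) = L i c)
include hL0 hL

theorem pow_apply_self_of_descent {c : M} (hc : c ∈ ker δ) (i : ℕ) :
    (δ ^ i) (L i c) = c := by
  simpa [hL0 c hc] using pow_apply_add_of_descent hL hc 0 i

theorem map_ker_le_ker_pow_of_descent {i m : ℕ} (him : i < m) :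
    (ker δ).map (L i) ≤ ker (δ ^ m) := by
  rintro _ ⟨c, hc, rfl⟩
  obtain ⟨k, rfl⟩ := Nat.exists_eq_add_of_lt him
  rw [mem_ker, show i + k + 1 = k + 1 + i by omega, pow_add, Module.End.mul_apply,
    pow_apply_self_of_descent hL0 hL hc, pow_succ, Module.End.mul_apply, mem_ker.mp hc,
    map_zero]

theorem ker_pow_succ_eq_partialSups_of_descent (n : ℕ) :
    ker (δ ^ (n + 1)) = partialSups (fun i => (ker δ).map (L i)) n := by
  induction n with
  | zero =>
    refine le_antisymm (fun a ha => ⟨a, by simpa using ha, hL0 a (by simpa using ha)⟩) ?_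
    exact map_ker_le_ker_pow_of_descent hL0 hL zero_lt_one
  | succ n ih =>
    rw [partialSups_add_one, ← ih]
    refine le_antisymm (fun a ha => ?_) (sup_le ?_ ?_)
    · have hc : (δ ^ (n + 1)) a ∈ ker δ := by
        rwa [mem_ker, ← Module.End.mul_apply, ← pow_succ']
      have hrest : a - L (n + 1) ((δ ^ (n + 1)) a) ∈ ker (δ ^ (n + 1)) := by
        rw [mem_ker, map_sub, pow_apply_self_of_descent hL0 hL hc, sub_self]
      simpa using Submodule.add_mem_sup hrest (Submodule.mem_map_of_mem (f := L (n + 1)) hc)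
    · exact (iterateKer δ).monotone (Nat.le_succ _)
    · exact map_ker_le_ker_pow_of_descent hL0 hL (Nat.lt_succ_self _)

theorem iSupIndep_map_ker_of_descent : iSupIndep fun i => (ker δ).map (L i) := by
  refine iSupIndep_of_disjoint_partialSups fun n => ?_
  rw [← ker_pow_succ_eq_partialSups_of_descent hL0 hL, Submodule.disjoint_def]
  rintro _ hb ⟨c, hc, rfl⟩
  have hc0 : c = 0 := by
    rw [← pow_apply_self_of_descent hL0 hL hc (n + 1)]
    exact mem_ker.mp hb
  rw [hc0, map_zero]

theorem iSup_map_ker_eq_iSup_ker_pow_of_descent :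
    ⨆ i, (ker δ).map (L i) = ⨆ n, ker (δ ^ (n + 1)) := by
  simp_rw [ker_pow_succ_eq_partialSups_of_descent hL0 hL, iSup_partialSups_eq]

theorem ker_pow_succ_eq_iSup_range_of_descent (n : ℕ) :
    ker (δ ^ (n + 1)) = ⨆ i ∈ Finset.range (n + 1), (ker δ).map (L i) := by
  rw [ker_pow_succ_eq_partialSups_of_descent hL0 hL, partialSups_eq_sup_range,
    Finset.sup_eq_iSup]

end Descent

section Derivation

variable {K A : Type*} [CommRing K] [Ring A] [Algebra K A] {δ : Module.End K A}
  (hleib : ∀ a b : A, δ (a * b) = δ a * b + a * δ b) {x : ℕ → A}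
  (hx : ∀ i : ℕ, δ (x (i + 1)) = x i)
include hleib hx

theorem apply_mulRight_succ_of_mem_ker (i : ℕ) (c : A) (hc : c ∈ ker δ) :
    δ (mulRight K (x (i + 1)) c) = mulRight K (x i) c := by
  simp [hleib, mem_ker.mp hc, hx]

theorem apply_mulLeft_succ_of_mem_ker (i : ℕ) (c : A) (hc : c ∈ ker δ) :
    δ (mulLeft K (x (i + 1)) c) = mulLeft K (x i) c := by
  simp [hleib, mem_ker.mp hc, hx]

end Derivation

/-- Let `δ` be a `K`-derivation of an associative unital `K`-algebra `A`
and let `(x i)_{i ≥ 0}` be a `δ`-descent (`x 0 = 1`, `δ (x (i+1)) = x i`).  Then the nil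
algebra `N(δ,A) = ⨆ n, ker δ^{n+1}` decomposes as the internal direct sums of `K`-subspaces
`N(δ,A) = ⊕_{i≥0} A^δ·x i = ⊕_{i≥0} (x i)·A^δ`, and for each `n ≥ 0`,
`N_n = ker δ^{n+1} = ⊕_{i=0}^n A^δ·x i = ⊕_{i=0}^n (x i)·A^δ`. -/
theorem stmt_0 {K A : Type*} [Field K] [Ring A] [Algebra K A]
    (δ : Module.End K A) (hleib : ∀ a b : A, δ (a * b) = δ a * b + a * δ b)
    (x : ℕ → A) (hx0 : x 0 = 1) (hx : ∀ i : ℕ, δ (x (i + 1)) = x i) :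
    iSupIndep (fun i : ℕ => (ker δ).map (mulRight K (x i))) ∧
    iSupIndep (fun i : ℕ => (ker δ).map (mulLeft K (x i))) ∧
    (⨆ i : ℕ, (ker δ).map (mulRight K (x i))) = (⨆ n : ℕ, ker (δ ^ (n + 1))) ∧
    (⨆ i : ℕ, (ker δ).map (mulLeft K (x i))) = (⨆ n : ℕ, ker (δ ^ (n + 1))) ∧
    (∀ n : ℕ, ker (δ ^ (n + 1)) =
      ⨆ i ∈ Finset.range (n + 1), (ker δ).map (mulRight K (x i))) ∧
    (∀ n : ℕ, ker (δ ^ (n + 1)) =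
      ⨆ i ∈ Finset.range (n + 1), (ker δ).map (mulLeft K (x i))) := by
  have hRight0 : ∀ c ∈ ker δ, mulRight K (x 0) c = c := fun c _ => by simp [hx0]
  have hLeft0 : ∀ c ∈ ker δ, mulLeft K (x 0) c = c := fun c _ => by simp [hx0]
  have hRight := apply_mulRight_succ_of_mem_ker hleib hx
  have hLeft := apply_mulLeft_succ_of_mem_ker hleib hx
  exact ⟨iSupIndep_map_ker_of_descent hRight0 hRight, iSupIndep_map_ker_of_descent hLeft0 hLeft,
    iSup_map_ker_eq_iSup_ker_pow_of_descent hRight0 hRight,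
    iSup_map_ker_eq_iSup_ker_pow_of_descent hLeft0 hLeft,
    ker_pow_succ_eq_iSup_range_of_descent hRight0 hRight,
    ker_pow_succ_eq_iSup_range_of_descent hLeft0 hLeft⟩
end

section
/- Suppose 1 ≠ 0 in A, δ^l = 0 for some finite l ≥ 2, and (x^[i])_{0≤i≤l-1} is a δ-descent of length l. Then δ^{l-1} ≠ 0, A = N(δ,A) = ⊕_{i=0}^{l-1} A^δ·x^[i] = ⊕_{i=0}^{l-1} x^[i]·A^δ as internal direct sums of K-subspaces, and N_j = ⊕_{i=0}^{j} A^δ·x^[i] = ⊕_{i=0}^{j} x^[i]·A^δ for all 0 ≤ j ≤ l-1. -/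
/-!
Write `μ i` for multiplication by `x^[i]` on the right (or on the left); for a constant `c` the
Leibniz rule gives `δ (μ (i+1) c) = μ i c`, hence `δ^i (μ i c) = c` and `δ^(i+1) (μ i c) = 0`.
So `c ↦ μ n c` splits off `δ^n : ker δ^(n+1) → ker δ`: every `a ∈ ker δ^(n+1)` is
`μ n (δ^n a)` plus an element of `ker δ^n`, and `μ n c ∈ ker δ^n` forces `c = 0`. By induction
`ker δ^n = ⨁_{i<n} μ i (ker δ)`, and `ker δ^l = A` since `δ^l = 0`.
-/

open LinearMap Finset

theorem Finset.supIndep_range_of_disjoint {α : Type*} [Lattice α] [OrderBot α]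
    [IsModularLattice α] {f : ℕ → α} {l : ℕ}
    (h : ∀ n < l, Disjoint (f n) ((range n).sup f)) : (range l).SupIndep f := by
  induction l with
  | zero => exact supIndep_empty f
  | succ l ih =>
    rw [range_add_one]
    exact (ih fun n hn => h n (by omega)).insert (h l l.lt_add_one)

theorem iSupIndep_fin_of_disjoint_biSup {α : Type*} [CompleteLattice α] [IsModularLattice α]
    {f : ℕ → α} {l : ℕ} (h : ∀ n < l, Disjoint (f n) (⨆ i ∈ range n, f i)) :
    iSupIndep fun i : Fin l => f i := by
  have hrange : (range l).SupIndep f :=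
    supIndep_range_of_disjoint fun n hn => by rw [Finset.sup_eq_iSup]; exact h n hn
  rw [← Nat.Iio_eq_range, ← Fin.map_valEmbedding_univ, supIndep_map] at hrange
  exact iSupIndep_iff_supIndep_univ.2 hrange

theorem iSup_fin_eq_biSup_range {α : Type*} [CompleteLattice α] (f : ℕ → α) (n : ℕ) :
    ⨆ i : Fin n, f i = ⨆ i ∈ range n, f i :=
  le_antisymm (iSup_le fun i => le_biSup f (mem_range.2 i.2))
    (iSup₂_le fun i hi => le_iSup (fun i : Fin n => f i) ⟨i, mem_range.1 hi⟩)

/-- `μ i` models multiplication by the `i`-th term `x^[i]` of a `δ`-descent of length `l`. -/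
structure IsDescentFamily {R M : Type*} [Semiring R] [AddCommMonoid M] [Module R M]
    (δ : Module.End R M) (l : ℕ) (μ : ℕ → Module.End R M) : Prop where
  apply_zero : ∀ c ∈ ker δ, μ 0 c = c
  apply_succ : ∀ i, i + 1 < l → ∀ c ∈ ker δ, δ (μ (i + 1) c) = μ i c

namespace IsDescentFamily

variable {R M : Type*} [Ring R] [AddCommGroup M] [Module R M]
  {δ : Module.End R M} {l : ℕ} {μ : ℕ → Module.End R M}

theorem pow_apply (hμ : IsDescentFamily δ l μ) {k i : ℕ} (hki : k ≤ i) (hi : i < l)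
    {c : M} (hc : c ∈ ker δ) : (δ ^ k) (μ i c) = μ (i - k) c := by
  induction k generalizing i with
  | zero => rfl
  | succ k ih =>
    obtain ⟨j, rfl⟩ : ∃ j, i = j + 1 := ⟨i - 1, by omega⟩
    rw [pow_succ, Module.End.mul_apply, hμ.apply_succ j hi c hc, ih (by omega) (by omega),
      Nat.add_sub_add_right]

theorem pow_self_apply (hμ : IsDescentFamily δ l μ) {i : ℕ} (hi : i < l) {c : M}
    (hc : c ∈ ker δ) : (δ ^ i) (μ i c) = c := by
  rw [hμ.pow_apply le_rfl hi hc, Nat.sub_self, hμ.apply_zero c hc]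

theorem map_ker_le_ker_pow_succ (hμ : IsDescentFamily δ l μ) {n : ℕ} (hn : n < l) :
    (ker δ).map (μ n) ≤ ker (δ ^ (n + 1)) := by
  rintro _ ⟨c, hc, rfl⟩
  rw [mem_ker, pow_succ', Module.End.mul_apply, hμ.pow_self_apply hn hc]
  exact hc

theorem disjoint_map_ker_ker_pow (hμ : IsDescentFamily δ l μ) {n : ℕ} (hn : n < l) :
    Disjoint ((ker δ).map (μ n)) (ker (δ ^ n)) := by
  rw [Submodule.disjoint_def]
  rintro _ ⟨c, hc, rfl⟩ hμc
  rw [mem_ker, hμ.pow_self_apply hn hc] at hμc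
  rw [hμc, map_zero]

theorem ker_pow_succ_eq_sup (hμ : IsDescentFamily δ l μ) {n : ℕ} (hn : n < l) :
    ker (δ ^ (n + 1)) = ker (δ ^ n) ⊔ (ker δ).map (μ n) := by
  refine le_antisymm (fun a ha => ?_) (sup_le ?_ (hμ.map_ker_le_ker_pow_succ hn))
  · have hc : (δ ^ n) a ∈ ker δ := by
      rwa [mem_ker, ← Module.End.mul_apply, ← pow_succ']
    have hrest : a - μ n ((δ ^ n) a) ∈ ker (δ ^ n) := by
      rw [mem_ker, map_sub, hμ.pow_self_apply hn hc, sub_self]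
    simpa using Submodule.add_mem_sup hrest (Submodule.mem_map_of_mem (f := μ n) hc)
  · rw [pow_succ']
    exact ker_le_ker_comp (δ ^ n) δ

theorem ker_pow_eq_biSup (hμ : IsDescentFamily δ l μ) {n : ℕ} (hn : n ≤ l) :
    ker (δ ^ n) = ⨆ i ∈ range n, (ker δ).map (μ i) := by
  induction n with
  | zero => simp [Module.End.one_eq_id]
  | succ n ih => rw [hμ.ker_pow_succ_eq_sup hn, ih (by omega), range_add_one, Finset.iSup_insert, sup_comm]

theorem iSupIndep (hμ : IsDescentFamily δ l μ) :
    iSupIndep fun i : Fin l => (ker δ).map (μ i) :=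
  iSupIndep_fin_of_disjoint_biSup (f := fun i => (ker δ).map (μ i)) fun n hn => by
    simpa only [← hμ.ker_pow_eq_biSup hn.le] using hμ.disjoint_map_ker_ker_pow hn

theorem iSup_eq_top (hμ : IsDescentFamily δ l μ) (hnil : δ ^ l = 0) :
    ⨆ i : Fin l, (ker δ).map (μ i) = ⊤ := by
  rw [iSup_fin_eq_biSup_range (fun i => (ker δ).map (μ i)), ← hμ.ker_pow_eq_biSup le_rfl, hnil,
    ker_zero]

end IsDescentFamily

section Descent

variable {K A : Type*} [CommSemiring K] [Ring A] [Algebra K A] {δ : Module.End K A}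
  {l : ℕ} {x : ℕ → A}

theorem isDescentFamily_mulRight (hleib : ∀ a b : A, δ (a * b) = δ a * b + a * δ b)
    (hx0 : x 0 = 1) (hx : ∀ i : ℕ, i + 1 < l → δ (x (i + 1)) = x i) :
    IsDescentFamily δ l fun i => mulRight K (x i) where
  apply_zero c _ := by rw [mulRight_apply, hx0, mul_one]
  apply_succ i hi c hc := by
    rw [mulRight_apply, mulRight_apply, hleib, mem_ker.1 hc, zero_mul, zero_add, hx i hi]

theorem isDescentFamily_mulLeft (hleib : ∀ a b : A, δ (a * b) = δ a * b + a * δ b)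
    (hx0 : x 0 = 1) (hx : ∀ i : ℕ, i + 1 < l → δ (x (i + 1)) = x i) :
    IsDescentFamily δ l fun i => mulLeft K (x i) where
  apply_zero c _ := by rw [mulLeft_apply, hx0, one_mul]
  apply_succ i hi c hc := by
    rw [mulLeft_apply, mulLeft_apply, hleib, mem_ker.1 hc, mul_zero, add_zero, hx i hi]

theorem map_one_eq_zero_of_leibniz (hleib : ∀ a b : A, δ (a * b) = δ a * b + a * δ b) :
    δ 1 = 0 := by
  simpa using hleib 1 1

end Descent

/-- If `1 ≠ 0` in `A`, `δ^l = 0` for some finite `l ≥ 2`, and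
`(x i)_{0 ≤ i ≤ l-1}` is a `δ`-descent of length `l`, then `δ^{l-1} ≠ 0`,
`A = N(δ,A) = ⊕_{i=0}^{l-1} A^δ·x i = ⊕_{i=0}^{l-1} (x i)·A^δ` as internal direct sums of
`K`-subspaces, and `N_j = ker δ^{j+1} = ⊕_{i=0}^{j} A^δ·x i = ⊕_{i=0}^{j} (x i)·A^δ` for
all `0 ≤ j ≤ l-1`. -/
theorem stmt_1 {K A : Type*} [Field K] [Ring A] [Algebra K A] [Nontrivial A]
    (δ : Module.End K A) (hleib : ∀ a b : A, δ (a * b) = δ a * b + a * δ b)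
    (l : ℕ) (hl : 2 ≤ l) (hnil : δ ^ l = 0)
    (x : ℕ → A) (hx0 : x 0 = 1) (hx : ∀ i : ℕ, i + 1 < l → δ (x (i + 1)) = x i) :
    δ ^ (l - 1) ≠ 0 ∧
    (⨆ n : ℕ, ker (δ ^ (n + 1))) = ⊤ ∧
    iSupIndep (fun i : Fin l => (ker δ).map (mulRight K (x (i : ℕ)))) ∧
    iSupIndep (fun i : Fin l => (ker δ).map (mulLeft K (x (i : ℕ)))) ∧
    (⨆ i : Fin l, (ker δ).map (mulRight K (x (i : ℕ)))) = ⊤ ∧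
    (⨆ i : Fin l, (ker δ).map (mulLeft K (x (i : ℕ)))) = ⊤ ∧
    (∀ j : ℕ, j < l → ker (δ ^ (j + 1)) =
      ⨆ i ∈ Finset.range (j + 1), (ker δ).map (mulRight K (x i))) ∧
    (∀ j : ℕ, j < l → ker (δ ^ (j + 1)) =
      ⨆ i ∈ Finset.range (j + 1), (ker δ).map (mulLeft K (x i))) := by
  have hR := isDescentFamily_mulRight (K := K) hleib hx0 hx
  have hL := isDescentFamily_mulLeft (K := K) hleib hx0 hx
  have hpow_ne : δ ^ (l - 1) ≠ 0 := fun h => by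
    simpa [h] using hR.pow_self_apply (by omega : l - 1 < l) (map_one_eq_zero_of_leibniz hleib)
  have hker_top : ker (δ ^ (l - 1 + 1)) = ⊤ := by
    rw [Nat.sub_add_cancel (by omega), hnil, ker_zero]
  exact ⟨hpow_ne, eq_top_iff.2 (hker_top ▸ le_iSup (fun n => ker (δ ^ (n + 1))) (l - 1)),
    hR.iSupIndep, hL.iSupIndep, hR.iSup_eq_top hnil, hL.iSup_eq_top hnil,
    fun j hj => hR.ker_pow_eq_biSup hj, fun j hj => hL.ker_pow_eq_biSup hj⟩
end

section
/- Suppose K has characteristic zero and δ(x) = 1 for some x ∈ A. Then [x, A^δ] ⊆ A^δ (so ad(x) restricts to a derivation of A^δ), the nil algebra decomposes as N(δ,A) = ⊕_{i≥0} A^δ·x^i = ⊕_{i≥0} x^i·A^δ as internal direct sums of K-subspaces, and N_n = ⊕_{i=0}^{n} A^δ·x^i = ⊕_{i=0}^{n} x^i·A^δ for every n ≥ 0 (i.e. N(δ,A) is the Ore extension A^δ[x; ad(x)|_{A^δ}]). -/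
/-!
From `δ x = 1` and the Leibniz rule, `δ (x ^ (i + 1)) = (i + 1) • x ^ i`, so on `A^δ` the maps
`ψ i = (· * x ^ i)` (or `(x ^ i * ·)`) satisfy `δ ^ m (ψ m c) = m! • c`. In characteristic zero
this identity alone does the work: an element `a ∈ N_{n+1}` has leading coefficient
`c = δ^{n+1} a / (n+1)! ∈ A^δ` with `a - ψ (n+1) c ∈ N_n`, and `ψ n c ∈ N_{n-1}` forces `c = 0`,
which makes the sum direct.
-/

open LinearMap
open scoped Nat

theorem iSupIndep_of_disjoint_biSup_lt {ι α : Type*} [LinearOrder ι] [CompleteLattice α]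
    [IsModularLattice α] [IsCompactlyGenerated α] {t : ι → α}
    (h : ∀ i, Disjoint (t i) (⨆ j < i, t j)) : iSupIndep t := by
  classical
  refine iSupIndep_iff_supIndep.mpr fun s ↦ ?_
  induction s using Finset.induction_on_max with
  | empty => exact Finset.supIndep_empty t
  | insert i s hlt hs =>
    exact hs.insert <| (h i).mono_right <| Finset.sup_le fun j hj ↦ le_biSup t (hlt j hj)

section Lowering

variable {K M : Type*} [Semiring K] [AddCommMonoid M] [Module K M]
  (δ : Module.End K M) {ψ : ℕ → Module.End K M}

theorem pow_apply_eq_factorial_smul_of_lowering (hψ₀ : ∀ c ∈ ker δ, ψ 0 c = c)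
    (hψ : ∀ i, ∀ c ∈ ker δ, δ (ψ (i + 1) c) = ((i : K) + 1) • ψ i c) (m : ℕ) :
    ∀ c ∈ ker δ, (δ ^ m) (ψ m c) = (m ! : K) • c := by
  induction m with
  | zero => simpa using hψ₀
  | succ m ih =>
    intro c hc
    rw [pow_succ, Module.End.mul_apply, hψ m c hc, map_smul, ih c hc, smul_smul,
      Nat.factorial_succ]
    push_cast
    ring_nf

variable (hψ : ∀ m, ∀ c ∈ ker δ, (δ ^ m) (ψ m c) = (m ! : K) • c)
include hψ

theorem map_ker_le_ker_pow_succ (m : ℕ) : (ker δ).map (ψ m) ≤ ker (δ ^ (m + 1)) := by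
  rintro _ ⟨c, hc, rfl⟩
  rw [mem_ker, pow_succ', Module.End.mul_apply, hψ m c hc, map_smul, mem_ker.mp hc, smul_zero]

end Lowering

section CharZero

variable {K M : Type*} [Field K] [CharZero K] [AddCommGroup M] [Module K M]
  (δ : Module.End K M) {ψ : ℕ → Module.End K M}
  (hψ : ∀ m, ∀ c ∈ ker δ, (δ ^ m) (ψ m c) = (m ! : K) • c)
include hψ

theorem disjoint_map_ker_ker_pow (n : ℕ) : Disjoint ((ker δ).map (ψ n)) (ker (δ ^ n)) := by
  rw [Submodule.disjoint_def]
  rintro _ ⟨c, hc, rfl⟩ hn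
  rw [mem_ker, hψ n c hc, smul_eq_zero] at hn
  rw [hn.resolve_left (by exact_mod_cast n.factorial_ne_zero), map_zero]

theorem ker_pow_add_two_eq_sup (n : ℕ) :
    ker (δ ^ (n + 2)) = ker (δ ^ (n + 1)) ⊔ (ker δ).map (ψ (n + 1)) := by
  refine le_antisymm (fun a ha ↦ ?_)
    (sup_le (δ.iterateKer.monotone (by omega)) (map_ker_le_ker_pow_succ δ hψ (n + 1)))
  have hfac : ((n + 1)! : K) ≠ 0 := by exact_mod_cast (n + 1).factorial_ne_zero
  set c := ((n + 1)! : K)⁻¹ • (δ ^ (n + 1)) a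
  have hc : c ∈ ker δ := by
    rw [mem_ker, map_smul, ← Module.End.mul_apply, ← pow_succ', mem_ker.mp ha, smul_zero]
  have hrest : a - ψ (n + 1) c ∈ ker (δ ^ (n + 1)) := by
    rw [mem_ker, map_sub, hψ (n + 1) c hc, smul_inv_smul₀ hfac, sub_self]
  simpa using Submodule.add_mem_sup hrest (Submodule.mem_map_of_mem (f := ψ (n + 1)) hc)

theorem ker_pow_succ_eq_biSup_map_ker (n : ℕ) :
    ker (δ ^ (n + 1)) = ⨆ i ∈ Finset.range (n + 1), (ker δ).map (ψ i) := by
  induction n with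
  | zero =>
    refine le_antisymm (fun a ha ↦ ?_) (by simpa using map_ker_le_ker_pow_succ δ hψ 0)
    have ha' : a ∈ ker δ := by simpa using ha
    have hψ₀ : ψ 0 a = a := by simpa using hψ 0 a ha'
    simpa [hψ₀] using Submodule.mem_map_of_mem (f := ψ 0) ha'
  | succ n ih =>
    rw [ker_pow_add_two_eq_sup δ hψ, ih, Finset.range_add_one (n := n + 1), Finset.iSup_insert,
      sup_comm]

theorem iSupIndep_map_ker : iSupIndep fun i ↦ (ker δ).map (ψ i) :=
  iSupIndep_of_disjoint_biSup_lt fun n ↦ (disjoint_map_ker_ker_pow δ hψ n).mono_right <|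
    iSup₂_le fun j hj ↦ (map_ker_le_ker_pow_succ δ hψ j).trans (δ.iterateKer.monotone hj)

theorem iSup_map_ker_eq_iSup_ker_pow :
    (⨆ i, (ker δ).map (ψ i)) = ⨆ n, ker (δ ^ (n + 1)) := by
  simp_rw [ker_pow_succ_eq_biSup_map_ker δ hψ, ← Finset.sup_eq_iSup, ← partialSups_eq_sup_range,
    iSup_partialSups_eq]

end CharZero

section Leibniz

variable {K A : Type*} [CommSemiring K] [Semiring A] [Algebra K A] (δ : Module.End K A)
  (hleib : ∀ a b : A, δ (a * b) = δ a * b + a * δ b) {x : A} (hx : δ x = 1)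
include hleib hx

theorem apply_pow_succ_of_apply_eq_one (k : ℕ) : δ (x ^ (k + 1)) = ((k : K) + 1) • x ^ k := by
  induction k with
  | zero => simp [hx]
  | succ k ih =>
    rw [pow_succ, hleib, ih, hx, mul_one, smul_mul_assoc, ← pow_succ, Nat.cast_succ,
      add_smul ((k : K) + 1) 1, one_smul]

theorem apply_mul_pow_succ_of_apply_eq_one (i : ℕ) {c : A} (hc : δ c = 0) :
    δ (c * x ^ (i + 1)) = ((i : K) + 1) • (c * x ^ i) := by
  rw [hleib, hc, zero_mul, zero_add, apply_pow_succ_of_apply_eq_one δ hleib hx, mul_smul_comm]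

theorem apply_pow_succ_mul_of_apply_eq_one (i : ℕ) {c : A} (hc : δ c = 0) :
    δ (x ^ (i + 1) * c) = ((i : K) + 1) • (x ^ i * c) := by
  rw [hleib, hc, mul_zero, add_zero, apply_pow_succ_of_apply_eq_one δ hleib hx, smul_mul_assoc]

theorem pow_apply_mul_pow_of_apply_eq_one (m : ℕ) :
    ∀ c ∈ ker δ, (δ ^ m) (mulRight K (x ^ m) c) = (m ! : K) • c :=
  pow_apply_eq_factorial_smul_of_lowering δ (ψ := fun i ↦ mulRight K (x ^ i)) (by simp)
    (fun i _ hc ↦ apply_mul_pow_succ_of_apply_eq_one δ hleib hx i hc) m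

theorem pow_apply_pow_mul_of_apply_eq_one (m : ℕ) :
    ∀ c ∈ ker δ, (δ ^ m) (mulLeft K (x ^ m) c) = (m ! : K) • c :=
  pow_apply_eq_factorial_smul_of_lowering δ (ψ := fun i ↦ mulLeft K (x ^ i)) (by simp)
    (fun i _ hc ↦ apply_pow_succ_mul_of_apply_eq_one δ hleib hx i hc) m

end Leibniz

/-- Suppose `char K = 0` and `δ x = 1` for some `x ∈ A`.  Then
`[x, A^δ] ⊆ A^δ` (so `ad x` restricts to a derivation of `A^δ`), the nil algebra decomposes
as `N(δ,A) = ⊕_{i≥0} A^δ·x^i = ⊕_{i≥0} x^i·A^δ` (internal direct sums of `K`-subspaces),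
and `N_n = ker δ^{n+1} = ⊕_{i=0}^n A^δ·x^i = ⊕_{i=0}^n x^i·A^δ` for every `n ≥ 0`
(i.e. `N(δ,A)` is the Ore extension `A^δ[x; ad(x)|_{A^δ}]`). -/
theorem stmt_2 {K A : Type*} [Field K] [CharZero K] [Ring A] [Algebra K A]
    (δ : Module.End K A) (hleib : ∀ a b : A, δ (a * b) = δ a * b + a * δ b)
    (x : A) (hx : δ x = 1) :
    (∀ c : A, δ c = 0 → δ (x * c - c * x) = 0) ∧
    iSupIndep (fun i : ℕ => (ker δ).map (mulRight K (x ^ i))) ∧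
    iSupIndep (fun i : ℕ => (ker δ).map (mulLeft K (x ^ i))) ∧
    (⨆ i : ℕ, (ker δ).map (mulRight K (x ^ i))) = (⨆ n : ℕ, ker (δ ^ (n + 1))) ∧
    (⨆ i : ℕ, (ker δ).map (mulLeft K (x ^ i))) = (⨆ n : ℕ, ker (δ ^ (n + 1))) ∧
    (∀ n : ℕ, ker (δ ^ (n + 1)) =
      ⨆ i ∈ Finset.range (n + 1), (ker δ).map (mulRight K (x ^ i))) ∧
    (∀ n : ℕ, ker (δ ^ (n + 1)) =
      ⨆ i ∈ Finset.range (n + 1), (ker δ).map (mulLeft K (x ^ i))) := by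
  have hR := pow_apply_mul_pow_of_apply_eq_one δ hleib hx
  have hL := pow_apply_pow_mul_of_apply_eq_one δ hleib hx
  refine ⟨fun c hc ↦ ?_, iSupIndep_map_ker δ hR, iSupIndep_map_ker δ hL,
    iSup_map_ker_eq_iSup_ker_pow δ hR, iSup_map_ker_eq_iSup_ker_pow δ hL,
    ker_pow_succ_eq_biSup_map_ker δ hR, ker_pow_succ_eq_biSup_map_ker δ hL⟩
  rw [map_sub, hleib, hleib, hx, hc, one_mul, mul_one, mul_zero, zero_mul, add_zero, zero_add,
    sub_self]
end

section
/- Let δ be a locally nilpotent K-derivation of A and (x^[i])_{i≥0} an infinite iterative δ-descent. Define φ(a) := Σ_{i≥0} (-1)^i x^[i]·δ^i(a) and ψ(a) := Σ_{i≥0} (-1)^i δ^i(a)·x^[i] (finite sums for each a by local nilpotence). Then: φ and ψ are well-defined K-linear maps A → A; φ is a homomorphism of right A^δ-modules and ψ a homomorphism of left A^δ-modules; φ and ψ are projections onto A^δ, i.e. im(φ) = im(ψ) = A^δ, φ(y) = ψ(y) = y for all y ∈ A^δ, φ vanishes on A_+ := ⊕_{i≥1} x^[i]·A^δ and ψ vanishes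 on ⊕_{i≥1} A^δ·x^[i]; in particular φ(x^[i]) = ψ(x^[i]) = 0 for all i ≥ 1. -/
/-!
Write `φ = ∑ (-1)^i x^[i] δ^i` and `ψ = ∑ (-1)^i δ^i (·) x^[i]`. Since `δ` is locally nilpotent,
both are finite sums on each element, hence linear. By the Leibniz rule and `δ x^[i+1] = x^[i]`,
applying `δ` to the partial sums of `φ a` telescopes to `± x^[n] δ^(n+1) a`, which vanishes for
large `n`; so `φ a` is a constant, and on a constant only the `i = 0` term survives.
Finally `φ (x^[n]) = ∑_j (-1)^j x^[j] x^[n-j] = (∑_j (-1)^j C(n,j)) x^[n] = 0` for `n ≥ 1`,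
and right `A^δ`-linearity extends this to `x^[n] A^δ`. The map `ψ` is the mirror image.
-/

open LinearMap Finset

section Series

variable {R M N : Type*} [CommSemiring R] [AddCommMonoid M] [Module R M]
  [AddCommMonoid N] [Module R N]

theorem finsum_apply_pow_eq_sum_range (δ : Module.End R M) (T : ℕ → M →ₗ[R] N) {a : M} {n : ℕ}
    (ha : (δ ^ n) a = 0) : ∑ᶠ i, T i ((δ ^ i) a) = ∑ i ∈ range n, T i ((δ ^ i) a) := by
  refine finsum_eq_sum_of_support_subset _ fun i => Function.mtr fun hin => ?_
  rw [Function.notMem_support,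
    Module.End.pow_map_zero_of_le (not_lt.1 (by simpa using hin)) ha, map_zero]

noncomputable def nilSeries (δ : Module.End R M) (hδ : ∀ a, ∃ n, (δ ^ n) a = 0)
    (T : ℕ → M →ₗ[R] N) : M →ₗ[R] N where
  toFun a := ∑ᶠ i, T i ((δ ^ i) a)
  map_add' a b := by
    obtain ⟨m, hm⟩ := hδ a
    obtain ⟨n, hn⟩ := hδ b
    have hab : (δ ^ max m n) (a + b) = 0 := by
      rw [map_add, Module.End.pow_map_zero_of_le (le_max_left m n) hm,
        Module.End.pow_map_zero_of_le (le_max_right m n) hn, add_zero]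
    rw [finsum_apply_pow_eq_sum_range δ T hab,
      finsum_apply_pow_eq_sum_range δ T (Module.End.pow_map_zero_of_le (le_max_left m n) hm),
      finsum_apply_pow_eq_sum_range δ T (Module.End.pow_map_zero_of_le (le_max_right m n) hn),
      ← sum_add_distrib]
    simp only [map_add]
  map_smul' k a := by
    obtain ⟨n, hn⟩ := hδ a
    have hka : (δ ^ n) (k • a) = 0 := by rw [map_smul, hn, smul_zero]
    rw [finsum_apply_pow_eq_sum_range δ T hka, finsum_apply_pow_eq_sum_range δ T hn,
      RingHom.id_apply, smul_sum]
    simp only [map_smul]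

variable (δ : Module.End R M) (hδ : ∀ a, ∃ n, (δ ^ n) a = 0) (T : ℕ → M →ₗ[R] N)

theorem nilSeries_apply (a : M) : nilSeries δ hδ T a = ∑ᶠ i, T i ((δ ^ i) a) := rfl

theorem nilSeries_eq_sum_range {a : M} {n : ℕ} (ha : (δ ^ n) a = 0) :
    nilSeries δ hδ T a = ∑ i ∈ range n, T i ((δ ^ i) a) :=
  finsum_apply_pow_eq_sum_range δ T ha

theorem nilSeries_of_map_eq_zero {a : M} (ha : δ a = 0) : nilSeries δ hδ T a = T 0 a := by
  rw [nilSeries_eq_sum_range δ hδ T (n := 1) (by rwa [pow_one]), sum_range_one, pow_zero,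
    Module.End.one_apply]

end Series

section Telescoping

variable {R M : Type*} [CommSemiring R] [AddCommGroup M] [Module R M]
  (δ : Module.End R M) (T : ℕ → Module.End R M)

theorem map_sum_range_succ_apply_pow (hT0 : ∀ b, δ (T 0 b) = T 0 (δ b))
    (hT : ∀ i b, δ (T (i + 1) b) = T (i + 1) (δ b) - T i b) (a : M) (n : ℕ) :
    δ (∑ i ∈ range (n + 1), T i ((δ ^ i) a)) = T n ((δ ^ (n + 1)) a) := by
  induction n with
  | zero => simp [hT0]
  | succ n ih =>
    rw [sum_range_succ, map_add, ih, hT, pow_succ' δ (n + 1), Module.End.mul_apply]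
    abel

/-- The commutator relations `[δ, T 0] = 0`, `[δ, T (i + 1)] = - T i` make
`δ ∘ nilSeries δ hδ T` a telescoping sum. -/
theorem map_nilSeries_eq_zero (hδ : ∀ a, ∃ n, (δ ^ n) a = 0) (hT0 : ∀ b, δ (T 0 b) = T 0 (δ b))
    (hT : ∀ i b, δ (T (i + 1) b) = T (i + 1) (δ b) - T i b) (a : M) :
    δ (nilSeries δ hδ T a) = 0 := by
  obtain ⟨n, hn⟩ := hδ a
  rw [nilSeries_eq_sum_range δ hδ T (Module.End.pow_map_zero_of_le n.le_succ hn),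
    map_sum_range_succ_apply_pow δ T hT0 hT, Module.End.pow_map_zero_of_le n.le_succ hn, map_zero]

end Telescoping

section Leibniz

variable {R A : Type*} [CommSemiring R] [Ring A] [Algebra R A] (δ : Module.End R A)

theorem map_neg_one_pow_mul (n : ℕ) (z : A) : δ ((-1) ^ n * z) = (-1) ^ n * δ z := by
  rcases neg_one_pow_eq_or A n with h | h <;> simp [h]

variable (hleib : ∀ a b : A, δ (a * b) = δ a * b + a * δ b)
include hleib

theorem map_one_of_leibniz : δ 1 = 0 := by
  simpa using hleib 1 1

theorem pow_apply_mul_of_map_eq_zero {c : A} (hc : δ c = 0) (a : A) (n : ℕ) :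
    (δ ^ n) (a * c) = (δ ^ n) a * c := by
  induction n with
  | zero => rfl
  | succ n ih => rw [pow_succ', Module.End.mul_apply, ih, hleib, hc, mul_zero, add_zero]; rfl

theorem pow_apply_mul_of_map_eq_zero_left {c : A} (hc : δ c = 0) (a : A) (n : ℕ) :
    (δ ^ n) (c * a) = c * (δ ^ n) a := by
  induction n with
  | zero => rfl
  | succ n ih => rw [pow_succ', Module.End.mul_apply, ih, hleib, hc, zero_mul, zero_add]; rfl

end Leibniz

section Descent

variable {R A : Type*} [CommSemiring R] [Ring A] [Algebra R A] (δ : Module.End R A)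
  (hδ : ∀ a, ∃ n, (δ ^ n) a = 0) (x : ℕ → A)

theorem pow_apply_of_descent (hx : ∀ i, δ (x (i + 1)) = x i) {i j : ℕ} (hji : j ≤ i) :
    (δ ^ j) (x i) = x (i - j) := by
  induction j with
  | zero => rfl
  | succ j ih =>
    rw [pow_succ', Module.End.mul_apply, ih (by omega), show i - j = i - (j + 1) + 1 by omega,
      hx]

theorem pow_succ_apply_of_descent (hleib : ∀ a b : A, δ (a * b) = δ a * b + a * δ b)
    (hx0 : x 0 = 1) (hx : ∀ i, δ (x (i + 1)) = x i) (i : ℕ) : (δ ^ (i + 1)) (x i) = 0 := by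
  rw [pow_succ', Module.End.mul_apply, pow_apply_of_descent δ x hx le_rfl, Nat.sub_self, hx0,
    map_one_of_leibniz δ hleib]

theorem sum_range_neg_one_pow_mul_choose_smul (y : A) {n : ℕ} (hn : n ≠ 0) :
    ∑ j ∈ range (n + 1), (-1 : A) ^ j * (n.choose j • y) = 0 := by
  have key : ∀ j, (-1 : A) ^ j * (n.choose j • y) = ((-1 : ℤ) ^ j * (n.choose j : ℤ)) • y := by
    intro j
    rw [zsmul_eq_mul, nsmul_eq_mul]
    push_cast
    rw [mul_assoc]
  simp only [key, ← sum_smul, Int.alternating_sum_range_choose, if_neg hn, zero_smul]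

/-- The projection `φ` onto the constants `A^δ`. -/
noncomputable def descentProjLeft : Module.End R A :=
  nilSeries δ hδ fun i => mulLeft R ((-1 : A) ^ i) ∘ₗ mulLeft R (x i)

/-- The projection `ψ` onto the constants `A^δ`. -/
noncomputable def descentProjRight : Module.End R A :=
  nilSeries δ hδ fun i => mulLeft R ((-1 : A) ^ i) ∘ₗ mulRight R (x i)

variable {δ x}

theorem descentProjLeft_mul (hleib : ∀ a b : A, δ (a * b) = δ a * b + a * δ b) {c : A}
    (hc : δ c = 0) (a : A) : descentProjLeft δ hδ x (a * c) = descentProjLeft δ hδ x a * c := by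
  obtain ⟨n, hn⟩ := hδ a
  have hac : (δ ^ n) (a * c) = 0 := by
    rw [pow_apply_mul_of_map_eq_zero δ hleib hc, hn, zero_mul]
  rw [descentProjLeft, nilSeries_eq_sum_range _ _ _ hn, nilSeries_eq_sum_range _ _ _ hac, sum_mul]
  simp only [pow_apply_mul_of_map_eq_zero δ hleib hc, coe_comp, Function.comp_apply,
    mulLeft_apply, mul_assoc]

theorem mul_descentProjRight (hleib : ∀ a b : A, δ (a * b) = δ a * b + a * δ b) {c : A}
    (hc : δ c = 0) (a : A) : descentProjRight δ hδ x (c * a) = c * descentProjRight δ hδ x a := by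
  obtain ⟨n, hn⟩ := hδ a
  have hca : (δ ^ n) (c * a) = 0 := by
    rw [pow_apply_mul_of_map_eq_zero_left δ hleib hc, hn, mul_zero]
  rw [descentProjRight, nilSeries_eq_sum_range _ _ _ hn, nilSeries_eq_sum_range _ _ _ hca, mul_sum]
  simp only [pow_apply_mul_of_map_eq_zero_left δ hleib hc, coe_comp, Function.comp_apply,
    mulLeft_apply, mulRight_apply, ← mul_assoc, ((Commute.neg_one_left c).pow_left _).eq]

theorem map_descentProjLeft (hleib : ∀ a b : A, δ (a * b) = δ a * b + a * δ b) (hx0 : x 0 = 1)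
    (hx : ∀ i, δ (x (i + 1)) = x i) (a : A) : δ (descentProjLeft δ hδ x a) = 0 := by
  refine map_nilSeries_eq_zero δ _ hδ (fun b => ?_) (fun i b => ?_) a
  · simp [hx0]
  · simp only [coe_comp, Function.comp_apply, mulLeft_apply]
    rw [map_neg_one_pow_mul, hleib, hx, pow_succ]
    noncomm_ring

theorem map_descentProjRight (hleib : ∀ a b : A, δ (a * b) = δ a * b + a * δ b) (hx0 : x 0 = 1)
    (hx : ∀ i, δ (x (i + 1)) = x i) (a : A) : δ (descentProjRight δ hδ x a) = 0 := by
  refine map_nilSeries_eq_zero δ _ hδ (fun b => ?_) (fun i b => ?_) a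
  · simp [hx0]
  · simp only [coe_comp, Function.comp_apply, mulLeft_apply, mulRight_apply]
    rw [map_neg_one_pow_mul, hleib, hx, pow_succ]
    noncomm_ring

theorem descentProjLeft_of_map_eq_zero (hx0 : x 0 = 1) {y : A} (hy : δ y = 0) :
    descentProjLeft δ hδ x y = y := by
  simp [descentProjLeft, nilSeries_of_map_eq_zero δ hδ _ hy, hx0]

theorem descentProjRight_of_map_eq_zero (hx0 : x 0 = 1) {y : A} (hy : δ y = 0) :
    descentProjRight δ hδ x y = y := by
  simp [descentProjRight, nilSeries_of_map_eq_zero δ hδ _ hy, hx0]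

theorem descentProjLeft_apply_descent (hleib : ∀ a b : A, δ (a * b) = δ a * b + a * δ b)
    (hx0 : x 0 = 1) (hx : ∀ i, δ (x (i + 1)) = x i)
    (hiter : ∀ i j, x i * x j = (i + j).choose i • x (i + j)) {i : ℕ} (hi : i ≠ 0) :
    descentProjLeft δ hδ x (x i) = 0 := by
  rw [descentProjLeft, nilSeries_eq_sum_range _ _ _ (pow_succ_apply_of_descent δ x hleib hx0 hx i),
    ← sum_range_neg_one_pow_mul_choose_smul (x i) hi]
  refine sum_congr rfl fun j hj => ?_
  have hji : j ≤ i := Nat.lt_succ_iff.1 (mem_range.1 hj)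
  rw [coe_comp, Function.comp_apply, mulLeft_apply, mulLeft_apply,
    pow_apply_of_descent δ x hx hji, hiter, Nat.add_sub_cancel' hji]

theorem descentProjRight_apply_descent (hleib : ∀ a b : A, δ (a * b) = δ a * b + a * δ b)
    (hx0 : x 0 = 1) (hx : ∀ i, δ (x (i + 1)) = x i)
    (hiter : ∀ i j, x i * x j = (i + j).choose i • x (i + j)) {i : ℕ} (hi : i ≠ 0) :
    descentProjRight δ hδ x (x i) = 0 := by
  rw [descentProjRight, nilSeries_eq_sum_range _ _ _ (pow_succ_apply_of_descent δ x hleib hx0 hx i),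
    ← sum_range_neg_one_pow_mul_choose_smul (x i) hi]
  refine sum_congr rfl fun j hj => ?_
  have hji : j ≤ i := Nat.lt_succ_iff.1 (mem_range.1 hj)
  rw [coe_comp, Function.comp_apply, mulLeft_apply, mulRight_apply,
    pow_apply_of_descent δ x hx hji, hiter, Nat.sub_add_cancel hji, Nat.choose_symm hji]

theorem iSup_map_mulLeft_le_ker_descentProjLeft
    (hleib : ∀ a b : A, δ (a * b) = δ a * b + a * δ b) (hx0 : x 0 = 1)
    (hx : ∀ i, δ (x (i + 1)) = x i) (hiter : ∀ i j, x i * x j = (i + j).choose i • x (i + j)) :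
    ⨆ (i : ℕ) (_ : 1 ≤ i), (ker δ).map (mulLeft R (x i)) ≤ ker (descentProjLeft δ hδ x) :=
  iSup₂_le fun i hi => Submodule.map_le_iff_le_comap.2 fun c hc => by
    rw [Submodule.mem_comap, mem_ker, mulLeft_apply, descentProjLeft_mul hδ hleib hc,
      descentProjLeft_apply_descent hδ hleib hx0 hx hiter (by omega), zero_mul]

theorem iSup_map_mulRight_le_ker_descentProjRight
    (hleib : ∀ a b : A, δ (a * b) = δ a * b + a * δ b) (hx0 : x 0 = 1)
    (hx : ∀ i, δ (x (i + 1)) = x i) (hiter : ∀ i j, x i * x j = (i + j).choose i • x (i + j)) :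
    ⨆ (i : ℕ) (_ : 1 ≤ i), (ker δ).map (mulRight R (x i)) ≤ ker (descentProjRight δ hδ x) :=
  iSup₂_le fun i hi => Submodule.map_le_iff_le_comap.2 fun c hc => by
    rw [Submodule.mem_comap, mem_ker, mulRight_apply, mul_descentProjRight hδ hleib hc,
      descentProjRight_apply_descent hδ hleib hx0 hx hiter (by omega), mul_zero]

end Descent

/-- Let `δ` be a locally nilpotent `K`-derivation of `A` and
`(x i)_{i≥0}` an infinite iterative `δ`-descent.  Define
`φ a := ∑_{i≥0} (-1)^i (x i)·δ^i a` and `ψ a := ∑_{i≥0} (-1)^i (δ^i a)·(x i)`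
(finite sums by local nilpotence).  Then `φ` and `ψ` are `K`-linear, `φ` is right
`A^δ`-linear and `ψ` is left `A^δ`-linear, both are projections onto `A^δ`
(`im φ = im ψ = A^δ` and `φ y = ψ y = y` for `y ∈ A^δ`), `φ` vanishes on
`A_+ = ⊕_{i≥1} (x i)·A^δ`, `ψ` vanishes on `⊕_{i≥1} A^δ·(x i)`; in particular
`φ (x i) = ψ (x i) = 0` for `i ≥ 1`. -/
theorem stmt_3 {K A : Type*} [Field K] [Ring A] [Algebra K A]
    (δ : Module.End K A) (hleib : ∀ a b : A, δ (a * b) = δ a * b + a * δ b)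
    (hln : ∀ a : A, ∃ n : ℕ, (δ ^ n) a = 0)
    (x : ℕ → A) (hx0 : x 0 = 1) (hx : ∀ i : ℕ, δ (x (i + 1)) = x i)
    (hiter : ∀ i j : ℕ, x i * x j = ((i + j).choose i) • x (i + j))
    (φ ψ : A → A)
    (hφ : ∀ a : A, φ a = ∑ᶠ i : ℕ, (-1 : A) ^ i * (x i * (δ ^ i) a))
    (hψ : ∀ a : A, ψ a = ∑ᶠ i : ℕ, (-1 : A) ^ i * ((δ ^ i) a * x i)) :
    (∀ a b : A, φ (a + b) = φ a + φ b) ∧ (∀ (k : K) (a : A), φ (k • a) = k • φ a) ∧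
    (∀ a b : A, ψ (a + b) = ψ a + ψ b) ∧ (∀ (k : K) (a : A), ψ (k • a) = k • ψ a) ∧
    (∀ a c : A, δ c = 0 → φ (a * c) = φ a * c) ∧
    (∀ a c : A, δ c = 0 → ψ (c * a) = c * ψ a) ∧
    (∀ a : A, δ (φ a) = 0) ∧ (∀ a : A, δ (ψ a) = 0) ∧
    (∀ y : A, δ y = 0 → φ y = y ∧ ψ y = y) ∧
    (∀ a ∈ ⨆ (i : ℕ) (_ : 1 ≤ i), (ker δ).map (mulLeft K (x i)), φ a = 0) ∧
    (∀ a ∈ ⨆ (i : ℕ) (_ : 1 ≤ i), (ker δ).map (mulRight K (x i)), ψ a = 0) ∧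
    (∀ i : ℕ, 1 ≤ i → φ (x i) = 0 ∧ ψ (x i) = 0) := by
  obtain rfl : φ = descentProjLeft δ hln x := funext hφ
  obtain rfl : ψ = descentProjRight δ hln x := funext hψ
  refine ⟨map_add _, map_smul _, map_add _, map_smul _,
    fun a c hc => descentProjLeft_mul hln hleib hc a,
    fun a c hc => mul_descentProjRight hln hleib hc a,
    map_descentProjLeft hln hleib hx0 hx, map_descentProjRight hln hleib hx0 hx,
    fun y hy => ⟨descentProjLeft_of_map_eq_zero hln hx0 hy,
      descentProjRight_of_map_eq_zero hln hx0 hy⟩,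
    fun a ha => iSup_map_mulLeft_le_ker_descentProjLeft hln hleib hx0 hx hiter ha,
    fun a ha => iSup_map_mulRight_le_ker_descentProjRight hln hleib hx0 hx hiter ha,
    fun i hi => ⟨descentProjLeft_apply_descent hln hleib hx0 hx hiter (by omega),
      descentProjRight_apply_descent hln hleib hx0 hx hiter (by omega)⟩⟩
end

section
/- Let δ_1, …, δ_n be pairwise commuting locally nilpotent K-derivations of A, and for each i let (x_i^[j])_{0≤j<l_i} be an iterative δ_i-descent of maximal length l_i whose members all lie in ∩_{k≠i} A^{δ_k}. Set A^δ := ∩_{i=1}^n A^{δ_i}, E := {α ∈ ℕ^n : α_i < l_i for all i}, and x^[α] := x_1^[α_1]·x_2^[α_2]·⋯·x_n^[α_n]. Then A = ⊕_{α∈E} x^[α]·A^δ = ⊕_{α∈E} A^δ·x^[α] as internal direct sums of K-subspaces. -/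
/-!
Write `δ^β = ∏ δᵢ^{βᵢ}`, which is independent of the order since the `δᵢ` commute. On monomials
`δ^β x^[α] = x^[α - β]` if `β ≤ α` and `0` otherwise, and `δ^β` commutes with multiplication by
elements of `A^δ` on either side.

Uniqueness: applied to a vanishing sum `∑ x^[α] c_α`, the operator `δ^β` for `β` maximal among
the indices with `c_β ≠ 0` leaves only `c_β`.

Existence: by local nilpotence only finitely many `β` have `δ^β a ≠ 0`. For a maximal such `β`,
`c = δ^β a` lies in `A^δ`, maximality of the lengths `lᵢ` forces `β ∈ E`, and `a - x^[β] c` has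
strictly fewer such indices.
-/

open LinearMap

lemma Pi.single_le_iff_le_apply {ι : Type*} [DecidableEq ι] {i : ι} {k : ℕ} {α : ι → ℕ} :
    Pi.single i k ≤ α ↔ k ≤ α i := by
  refine ⟨fun h => by simpa using h i, fun h j => ?_⟩
  rcases eq_or_ne j i with rfl | hj
  · simpa using h
  · simp [hj]

section MultiPow

variable {ι M : Type*} [Monoid M] (f : ι → M)

lemma pairwise_commute_pow (hf : ∀ i j, Commute (f i) (f j)) (β : ι → ℕ) (s : Finset ι) :
    (s : Set ι).Pairwise (Function.onFun Commute fun i => f i ^ β i) :=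
  fun i _ j _ _ => (hf i j).pow_pow _ _

variable [Fintype ι]

def multiPow (hf : ∀ i j, Commute (f i) (f j)) (β : ι → ℕ) : M :=
  Finset.univ.noncommProd (fun i => f i ^ β i) (pairwise_commute_pow f hf β Finset.univ)

variable {f} (hf : ∀ i j, Commute (f i) (f j))

@[simp]
lemma multiPow_zero : multiPow f hf 0 = 1 :=
  (Finset.noncommProd_eq_pow_card _ _ _ 1 fun _ _ => pow_zero _).trans (one_pow _)

lemma multiPow_add (β γ : ι → ℕ) :
    multiPow f hf (β + γ) = multiPow f hf β * multiPow f hf γ := by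
  simp only [multiPow, Pi.add_apply, pow_add]
  exact Finset.noncommProd_mul_distrib (fun i => f i ^ β i) (fun i => f i ^ γ i) _ _
    fun i _ j _ _ => (hf i j).pow_pow _ _

lemma multiPow_single [DecidableEq ι] (i : ι) (k : ℕ) :
    multiPow f hf (Pi.single i k) = f i ^ k := by
  rw [multiPow, ← Finset.mul_noncommProd_erase _ (Finset.mem_univ i), Pi.single_eq_same]
  convert mul_one (f i ^ k)
  refine (Finset.noncommProd_eq_pow_card _ _ _ 1 fun j hj => ?_).trans (one_pow _)
  rw [Pi.single_eq_of_ne (Finset.ne_of_mem_erase hj), pow_zero]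

lemma multiPow_of_le {β γ : ι → ℕ} (h : γ ≤ β) :
    multiPow f hf β = multiPow f hf (β - γ) * multiPow f hf γ := by
  rw [← multiPow_add, tsub_add_cancel_of_le h]

lemma commute_multiPow {g : M} (hg : ∀ i, Commute g (f i)) (β : ι → ℕ) :
    Commute g (multiPow f hf β) :=
  Finset.noncommProd_commute _ _ _ _ fun i _ => (hg i).pow_right _

end MultiPow

lemma lt_of_multiPow_apply_ne_zero {ι R V : Type*} [Fintype ι] [DecidableEq ι] [CommSemiring R]
    [AddCommMonoid V] [Module R V] {f : ι → Module.End R V} (hf : ∀ i j, Commute (f i) (f j))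
    {β : ι → ℕ} {a : V} (h : multiPow f hf β a ≠ 0) {i : ι} {k : ℕ} (hk : (f i ^ k) a = 0) :
    β i < k := by
  by_contra! hki
  apply h
  rw [multiPow_of_le hf (Pi.single_le_iff_le_apply.mpr hki), multiPow_single,
    Module.End.mul_apply, hk, map_zero]

section Leibniz

variable {R A : Type*} [CommSemiring R] [Ring A] [Algebra R A] {d : Module.End R A}

lemma map_one_eq_zero_of_leibniz_s8 (hd : ∀ a b, d (a * b) = d a * b + a * d b) : d 1 = 0 := by
  simpa using hd 1 1

lemma map_list_prod_eq_zero_of_leibniz (hd : ∀ a b, d (a * b) = d a * b + a * d b)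
    (l : List A) (hl : ∀ y ∈ l, d y = 0) : d l.prod = 0 := by
  induction l with
  | nil => exact map_one_eq_zero_of_leibniz_s8 hd
  | cons y l ih =>
    rw [List.prod_cons, hd, hl y List.mem_cons_self,
      ih fun z hz => hl z (List.mem_cons_of_mem _ hz), zero_mul, mul_zero, add_zero]

lemma map_ofFn_prod_of_leibniz (hd : ∀ a b, d (a * b) = d a * b + a * d b) {m : ℕ}
    (g : Fin m → A) (i : Fin m) (hg : ∀ k ≠ i, d (g k) = 0) :
    d (List.ofFn g).prod = (List.ofFn (Function.update g i (d (g i)))).prod := by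
  induction m with
  | zero => exact i.elim0
  | succ m ih =>
    rw [List.ofFn_succ, List.ofFn_succ, List.prod_cons, List.prod_cons, hd]
    cases i using Fin.cases with
    | zero =>
      rw [map_list_prod_eq_zero_of_leibniz hd _ ?_, mul_zero, add_zero, Function.update_self]
      · simp only [Function.update_of_ne (Fin.succ_ne_zero _)]
      intro y hy
      obtain ⟨k, rfl⟩ := List.mem_ofFn.mp hy
      exact hg k.succ (Fin.succ_ne_zero k)
    | succ i =>
      rw [hg 0 (Fin.succ_ne_zero i).symm, zero_mul, zero_add,
        Function.update_of_ne (Fin.succ_ne_zero i).symm,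
        ih (fun k => g k.succ) i fun k hk => hg k.succ (Fin.succ_injective _ |>.ne hk)]
      exact congrArg (fun g' => g 0 * (List.ofFn g').prod)
        (Function.update_comp_eq_of_injective g (Fin.succ_injective m) i _).symm

lemma commute_mulRight_of_leibniz (hd : ∀ a b, d (a * b) = d a * b + a * d b) {c : A}
    (hc : d c = 0) : Commute (mulRight R c) d :=
  LinearMap.ext fun y => by simp [hd, hc]

lemma commute_mulLeft_of_leibniz (hd : ∀ a b, d (a * b) = d a * b + a * d b) {c : A}
    (hc : d c = 0) : Commute (mulLeft R c) d :=
  LinearMap.ext fun y => by simp [hd, hc]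

end Leibniz

section Descent

variable {K A : Type*} [CommRing K] [Ring A] [Algebra K A] {n : ℕ}

def descentMonomial (x : Fin n → ℕ → A) (α : Fin n → ℕ) : A :=
  (List.ofFn fun i => x i (α i)).prod

structure IsDescentFamily_s8 (δ : Fin n → Module.End K A) (l : Fin n → ℕ∞) (x : Fin n → ℕ → A) :
    Prop where
  apply_zero : ∀ i, x i 0 = 1
  map_succ : ∀ i (j : ℕ), ((j + 1 : ℕ) : ℕ∞) < l i → δ i (x i (j + 1)) = x i j
  map_of_ne : ∀ i k, k ≠ i → ∀ j : ℕ, (j : ℕ∞) < l i → δ k (x i j) = 0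

variable {δ : Fin n → Module.End K A} {l : Fin n → ℕ∞} {x : Fin n → ℕ → A}

lemma descentMonomial_zero (hx : IsDescentFamily_s8 δ l x) : descentMonomial x 0 = 1 :=
  List.prod_eq_one fun _ hy => by
    obtain ⟨i, rfl⟩ := List.mem_ofFn.mp hy
    exact hx.apply_zero i

lemma apply_descentMonomial (hleib : ∀ i a b, δ i (a * b) = δ i a * b + a * δ i b)
    (hx : IsDescentFamily_s8 δ l x) (i : Fin n) {α : Fin n → ℕ} (hα : ∀ k, (α k : ℕ∞) < l k) :
    δ i (descentMonomial x α) =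
      if α i = 0 then 0 else descentMonomial x (α - Pi.single i 1) := by
  rw [descentMonomial, map_ofFn_prod_of_leibniz (hleib i) _ i
    fun k hk => hx.map_of_ne k i hk.symm _ (hα k)]
  split_ifs with h
  · rw [h, hx.apply_zero, map_one_eq_zero_of_leibniz_s8 (hleib i)]
    exact List.prod_eq_zero (List.mem_ofFn.mpr ⟨i, Function.update_self ..⟩)
  · obtain ⟨j, hj⟩ := Nat.exists_eq_succ_of_ne_zero h
    rw [hj, hx.map_succ i j (hj ▸ hα i :), descentMonomial]
    congr 2
    funext k
    rcases eq_or_ne k i with rfl | hk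
    · simp [hj]
    · simp [hk]

open scoped Classical in
lemma multiPow_apply_descentMonomial (hleib : ∀ i a b, δ i (a * b) = δ i a * b + a * δ i b)
    (hcomm : ∀ i j, Commute (δ i) (δ j)) (hx : IsDescentFamily_s8 δ l x) (β : Fin n → ℕ)
    {α : Fin n → ℕ} (hα : ∀ k, (α k : ℕ∞) < l k) :
    multiPow δ hcomm β (descentMonomial x α) =
      if β ≤ α then descentMonomial x (α - β) else 0 := by
  induction β using Pi.single_induction generalizing α with
  | zero => simp
  | add β γ hβ hγ =>
    have hsub : ∀ k, ((α - γ) k : ℕ∞) < l k := fun k =>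
      lt_of_le_of_lt (by exact_mod_cast tsub_le_self) (hα k)
    rw [multiPow_add, Module.End.mul_apply, hγ hα]
    by_cases hγα : γ ≤ α
    · rw [if_pos hγα, hβ hsub, tsub_tsub, add_comm γ, ← le_tsub_iff_right hγα]
    · rw [if_neg hγα, map_zero, if_neg fun h => hγα (le_trans le_add_self h)]
  | single i m =>
    induction m generalizing α with
    | zero => simp
    | succ m ih =>
      have hle : Pi.single i (m + 1) ≤ α ↔ Pi.single i m ≤ α ∧ α i - m ≠ 0 := by
        simp only [Pi.single_le_iff_le_apply]
        omega
      rw [multiPow_single, pow_succ', Module.End.mul_apply, ← multiPow_single hcomm i m, ih hα]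
      by_cases hm : Pi.single i m ≤ α
      · have hsub : ∀ k, ((α - Pi.single i m : Fin n → ℕ) k : ℕ∞) < l k := fun k =>
          lt_of_le_of_lt (by exact_mod_cast tsub_le_self) (hα k)
        rw [if_pos hm, apply_descentMonomial hleib hx i hsub, tsub_tsub, ← Pi.single_add]
        simp only [hle, hm, true_and, Pi.sub_apply, Pi.single_eq_same, ite_not]
      · rw [if_neg hm, map_zero, if_neg (hm ∘ And.left ∘ hle.mp)]

lemma multiPow_apply_of_commute (hcomm : ∀ i j, Commute (δ i) (δ j))
    {μ : A →ₗ[K] A →ₗ[K] A} {c : A} (hμ : ∀ i, Commute (μ.flip c) (δ i)) (β : Fin n → ℕ)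
    (y : A) : multiPow δ hcomm β (μ y c) = μ (multiPow δ hcomm β y) c :=
  (LinearMap.congr_fun (commute_multiPow hcomm hμ β).eq y).symm

-- `μ` is `(y, c) ↦ y * c` or `(y, c) ↦ c * y`: both decompositions of the theorem at once.
theorem iSupIndep_map_descentMonomial
    (hleib : ∀ i a b, δ i (a * b) = δ i a * b + a * δ i b)
    (hcomm : ∀ i j, Commute (δ i) (δ j)) (hx : IsDescentFamily_s8 δ l x)
    (μ : A →ₗ[K] A →ₗ[K] A) (hμ1 : ∀ c, μ 1 c = c)
    (hμδ : ∀ c ∈ ⨅ i, ker (δ i), ∀ i, Commute (μ.flip c) (δ i)) :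
    iSupIndep fun α : {α : Fin n → ℕ // ∀ i, (α i : ℕ∞) < l i} =>
      (⨅ i, ker (δ i)).map (μ (descentMonomial x α.1)) := by
  classical
  rw [iSupIndep_iff_finsetSum_eq_zero_imp_eq_zero]
  intro s v hv hsum
  choose! c hc hcv using fun α hα => Submodule.mem_map.mp (hv α hα)
  suffices ∀ α ∈ s, c α = 0 by
    intro α hα
    rw [← hcv α hα, this α hα, map_zero]
  by_contra! hne
  obtain ⟨β, hβ⟩ := Finset.exists_maximal (s := s.filter (c · ≠ 0)) (by
    obtain ⟨α, hα, hcα⟩ := hne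
    exact ⟨α, Finset.mem_filter.mpr ⟨hα, hcα⟩⟩)
  obtain ⟨hβs, hβc⟩ := Finset.mem_filter.mp hβ.prop
  have hconst : ∀ α ∈ s, ∀ i, Commute (μ.flip (c α)) (δ i) := fun α hα => hμδ _ (hc α hα)
  apply hβc
  calc c β = multiPow δ hcomm β.1 (∑ α ∈ s, v α) := by
        rw [map_sum, Finset.sum_eq_single_of_mem β hβs]
        · rw [← hcv β hβs, multiPow_apply_of_commute hcomm (hconst β hβs),
            multiPow_apply_descentMonomial hleib hcomm hx _ β.2, if_pos le_rfl, tsub_self,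
            descentMonomial_zero hx, hμ1]
        intro α hα hαβ
        rw [← hcv α hα, multiPow_apply_of_commute hcomm (hconst α hα),
          multiPow_apply_descentMonomial hleib hcomm hx _ α.2]
        split_ifs with hle
        · have hcα : c α = 0 := by
            by_contra hcα
            exact hαβ (le_antisymm (hβ.2 (Finset.mem_filter.mpr ⟨hα, hcα⟩) hle) hle)
          rw [hcα, map_zero]
        · rw [map_zero, LinearMap.zero_apply]
    _ = 0 := by rw [hsum, map_zero]

lemma coe_lt_of_multiPow_apply_ne_zero (hcomm : ∀ i j, Commute (δ i) (δ j))
    (hmax : ∀ i, (l i = ⊤ ∧ ∀ m : ℕ, δ i ^ m ≠ 0) ∨ ∃ m : ℕ, l i = m ∧ δ i ^ m = 0)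
    {β : Fin n → ℕ} {a : A} (h : multiPow δ hcomm β a ≠ 0) (i : Fin n) : (β i : ℕ∞) < l i := by
  obtain ⟨hl, -⟩ | ⟨m, hl, hm⟩ := hmax i
  · exact hl ▸ ENat.natCast_lt_top _
  · rw [hl, Nat.cast_lt]
    exact lt_of_multiPow_apply_ne_zero hcomm h (by rw [hm, LinearMap.zero_apply])

theorem mem_iSup_map_descentMonomial
    (hleib : ∀ i a b, δ i (a * b) = δ i a * b + a * δ i b)
    (hcomm : ∀ i j, Commute (δ i) (δ j)) (hx : IsDescentFamily_s8 δ l x)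
    (hmax : ∀ i, (l i = ⊤ ∧ ∀ m : ℕ, δ i ^ m ≠ 0) ∨ ∃ m : ℕ, l i = m ∧ δ i ^ m = 0)
    (μ : A →ₗ[K] A →ₗ[K] A) (hμ1 : ∀ c, μ 1 c = c)
    (hμδ : ∀ c ∈ ⨅ i, ker (δ i), ∀ i, Commute (μ.flip c) (δ i))
    (F : Finset (Fin n → ℕ)) {a : A} (ha : ∀ β, multiPow δ hcomm β a ≠ 0 → β ∈ F) :
    a ∈ ⨆ α : {α : Fin n → ℕ // ∀ i, (α i : ℕ∞) < l i},
      (⨅ i, ker (δ i)).map (μ (descentMonomial x α.1)) := by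
  classical
  induction F using Finset.strongInduction generalizing a with
  | H F ih =>
    by_cases hsupp : (F.filter (multiPow δ hcomm · a ≠ 0)).Nonempty
    swap
    · have h0 : multiPow δ hcomm 0 a = 0 := by
        by_contra h0
        exact hsupp ⟨0, Finset.mem_filter.mpr ⟨ha 0 h0, h0⟩⟩
      rw [multiPow_zero, Module.End.one_apply] at h0
      exact h0 ▸ zero_mem _
    obtain ⟨β, hβ⟩ := Finset.exists_maximal hsupp
    obtain ⟨hβF, hβa⟩ := Finset.mem_filter.mp hβ.prop
    set c := multiPow δ hcomm β a with hcdef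
    have hc : c ∈ ⨅ i, ker (δ i) := by
      refine Submodule.mem_iInf _ |>.mpr fun i => mem_ker.mpr ?_
      have hδc : δ i c = multiPow δ hcomm (Pi.single i 1 + β) a := by
        rw [multiPow_add, multiPow_single, pow_one, Module.End.mul_apply]
      by_contra hne
      rw [hδc] at hne
      simpa using hβ.2 (Finset.mem_filter.mpr ⟨ha _ hne, hne⟩) le_add_self i
    have hβE := coe_lt_of_multiPow_apply_ne_zero hcomm hmax hβa
    rw [← sub_add_cancel a (μ (descentMonomial x β) c)]
    refine add_mem (ih _ (Finset.erase_ssubset hβF) fun γ hγ => ?_)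
      (Submodule.mem_iSup_of_mem ⟨β, hβE⟩ (Submodule.mem_map_of_mem hc))
    rw [map_sub, multiPow_apply_of_commute hcomm (hμδ c hc),
      multiPow_apply_descentMonomial hleib hcomm hx γ hβE] at hγ
    refine Finset.mem_erase.mpr ⟨?_, ?_⟩
    · rintro rfl
      rw [if_pos le_rfl, tsub_self, descentMonomial_zero hx, hμ1, sub_self] at hγ
      exact hγ rfl
    · by_cases hγa : multiPow δ hcomm γ a = 0
      · split_ifs at hγ with hγβ
        · refine absurd ?_ hβa
          rw [hcdef, multiPow_of_le hcomm hγβ, Module.End.mul_apply, hγa, map_zero]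
        · simp [hγa] at hγ
      · exact ha γ hγa

theorem iSup_map_descentMonomial_eq_top
    (hleib : ∀ i a b, δ i (a * b) = δ i a * b + a * δ i b)
    (hcomm : ∀ i j, Commute (δ i) (δ j)) (hln : ∀ i, ∀ a : A, ∃ m : ℕ, (δ i ^ m) a = 0)
    (hx : IsDescentFamily_s8 δ l x)
    (hmax : ∀ i, (l i = ⊤ ∧ ∀ m : ℕ, δ i ^ m ≠ 0) ∨ ∃ m : ℕ, l i = m ∧ δ i ^ m = 0)
    (μ : A →ₗ[K] A →ₗ[K] A) (hμ1 : ∀ c, μ 1 c = c)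
    (hμδ : ∀ c ∈ ⨅ i, ker (δ i), ∀ i, Commute (μ.flip c) (δ i)) :
    ⨆ α : {α : Fin n → ℕ // ∀ i, (α i : ℕ∞) < l i},
      (⨅ i, ker (δ i)).map (μ (descentMonomial x α.1)) = ⊤ := by
  refine eq_top_iff.mpr fun a _ => ?_
  choose N hN using fun i => hln i a
  refine mem_iSup_map_descentMonomial hleib hcomm hx hmax μ hμ1 hμδ
    (Fintype.piFinset fun i => Finset.range (N i)) fun β hβ => ?_
  exact Fintype.mem_piFinset.mpr fun i =>
    Finset.mem_range.mpr (lt_of_multiPow_apply_ne_zero hcomm hβ (hN i))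

end Descent

theorem stmt_8_general {K A : Type*} [Field K] [Ring A] [Algebra K A]
    (n : ℕ) (δ : Fin n → Module.End K A)
    (hleib : ∀ i, ∀ a b : A, δ i (a * b) = δ i a * b + a * δ i b)
    (hcomm : ∀ i j, Commute (δ i) (δ j))
    (hln : ∀ i, ∀ a : A, ∃ m : ℕ, ((δ i) ^ m) a = 0)
    (l : Fin n → ℕ∞)
    (x : Fin n → ℕ → A)
    (hx0 : ∀ i, x i 0 = 1)
    (hxd : ∀ i (j : ℕ), ((j + 1 : ℕ) : ℕ∞) < l i → δ i (x i (j + 1)) = x i j)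
    (hmax : ∀ i, (l i = ⊤ ∧ ∀ m : ℕ, (δ i) ^ m ≠ 0) ∨
      (∃ m : ℕ, l i = (m : ℕ∞) ∧ (δ i) ^ m = 0))
    (hmem : ∀ i k, k ≠ i → ∀ j : ℕ, (j : ℕ∞) < l i → δ k (x i j) = 0) :
    iSupIndep (fun α : {α : Fin n → ℕ // ∀ i, ((α i : ℕ∞) < l i)} =>
      (⨅ i, ker (δ i)).map
        (mulLeft K ((List.ofFn fun i => x i (α.1 i)).prod))) ∧
    (⨆ α : {α : Fin n → ℕ // ∀ i, ((α i : ℕ∞) < l i)},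
      (⨅ i, ker (δ i)).map
        (mulLeft K ((List.ofFn fun i => x i (α.1 i)).prod))) = ⊤ ∧
    iSupIndep (fun α : {α : Fin n → ℕ // ∀ i, ((α i : ℕ∞) < l i)} =>
      (⨅ i, ker (δ i)).map
        (mulRight K ((List.ofFn fun i => x i (α.1 i)).prod))) ∧
    (⨆ α : {α : Fin n → ℕ // ∀ i, ((α i : ℕ∞) < l i)},
      (⨅ i, ker (δ i)).map
        (mulRight K ((List.ofFn fun i => x i (α.1 i)).prod))) = ⊤ := by
  have hx : IsDescentFamily_s8 δ l x := ⟨hx0, hxd, hmem⟩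
  have hconst {c : A} (hc : c ∈ ⨅ i, ker (δ i)) (i : Fin n) : δ i c = 0 :=
    mem_ker.mp (Submodule.mem_iInf _ |>.mp hc i)
  have hleft : ∀ c ∈ ⨅ i, ker (δ i), ∀ i, Commute ((LinearMap.mul K A).flip c) (δ i) :=
    fun c hc i => commute_mulRight_of_leibniz (hleib i) (hconst hc i)
  have hright : ∀ c ∈ ⨅ i, ker (δ i), ∀ i, Commute ((LinearMap.mul K A).flip.flip c) (δ i) :=
    fun c hc i => commute_mulLeft_of_leibniz (hleib i) (hconst hc i)
  refine ⟨?_, ?_, ?_, ?_⟩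
  · exact iSupIndep_map_descentMonomial hleib hcomm hx (LinearMap.mul K A) one_mul hleft
  · exact iSup_map_descentMonomial_eq_top hleib hcomm hln hx hmax (LinearMap.mul K A) one_mul hleft
  · exact iSupIndep_map_descentMonomial hleib hcomm hx (LinearMap.mul K A).flip mul_one hright
  · exact iSup_map_descentMonomial_eq_top hleib hcomm hln hx hmax (LinearMap.mul K A).flip mul_one
      hright

/-- Let `δ 0, …, δ (n-1)` be pairwise commuting locally nilpotent
`K`-derivations of `A`, and for each `i` let `(x i j)_{0 ≤ j < l i}` be an iterative
`δ i`-descent of maximal length `l i ∈ ℕ∞` whose members all lie in `∩_{k ≠ i} A^{δ k}`.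
With `A^δ := ∩ᵢ ker (δ i)`, `E := {α : Fin n → ℕ | ∀ i, α i < l i}` and
`x^[α] := x 0 (α 0) ⋯ x (n-1) (α (n-1))` (ordered product), one has
`A = ⊕_{α ∈ E} x^[α]·A^δ = ⊕_{α ∈ E} A^δ·x^[α]` as internal direct sums of
`K`-subspaces. -/
theorem stmt_8 {K A : Type*} [Field K] [Ring A] [Algebra K A]
    (n : ℕ) (δ : Fin n → Module.End K A)
    (hleib : ∀ i, ∀ a b : A, δ i (a * b) = δ i a * b + a * δ i b)
    (hcomm : ∀ i j, Commute (δ i) (δ j))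
    (hln : ∀ i, ∀ a : A, ∃ m : ℕ, ((δ i) ^ m) a = 0)
    (l : Fin n → ℕ∞) (hl1 : ∀ i, 1 ≤ l i)
    (x : Fin n → ℕ → A)
    (hx0 : ∀ i, x i 0 = 1)
    (hxd : ∀ i (j : ℕ), ((j + 1 : ℕ) : ℕ∞) < l i → δ i (x i (j + 1)) = x i j)
    (hiter : ∀ i (j k : ℕ), ((j + k : ℕ) : ℕ∞) < l i →
      x i j * x i k = ((j + k).choose j) • x i (j + k))
    (hmax : ∀ i, (l i = ⊤ ∧ ∀ m : ℕ, (δ i) ^ m ≠ 0) ∨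
      (∃ m : ℕ, l i = (m : ℕ∞) ∧ (δ i) ^ m = 0))
    (hmem : ∀ i k, k ≠ i → ∀ j : ℕ, (j : ℕ∞) < l i → δ k (x i j) = 0) :
    iSupIndep (fun α : {α : Fin n → ℕ // ∀ i, ((α i : ℕ∞) < l i)} =>
      (⨅ i, ker (δ i)).map
        (mulLeft K ((List.ofFn fun i => x i (α.1 i)).prod))) ∧
    (⨆ α : {α : Fin n → ℕ // ∀ i, ((α i : ℕ∞) < l i)},
      (⨅ i, ker (δ i)).map
        (mulLeft K ((List.ofFn fun i => x i (α.1 i)).prod))) = ⊤ ∧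
    iSupIndep (fun α : {α : Fin n → ℕ // ∀ i, ((α i : ℕ∞) < l i)} =>
      (⨅ i, ker (δ i)).map
        (mulRight K ((List.ofFn fun i => x i (α.1 i)).prod))) ∧
    (⨆ α : {α : Fin n → ℕ // ∀ i, ((α i : ℕ∞) < l i)},
      (⨅ i, ker (δ i)).map
        (mulRight K ((List.ofFn fun i => x i (α.1 i)).prod))) = ⊤ :=
  stmt_8_general n δ hleib hcomm hln l x hx0 hxd hmax hmem
end

section
/- Suppose K has characteristic p > 0, δ_1, …, δ_n are pairwise commuting K-derivations of A with δ_i^p = 0 for all i, and x_1, …, x_n ∈ A satisfy δ_i(x_j) = δ_{ij} (Kronecker delta). Then A = ⊕_{α} A^δ·x^α = ⊕_{α} x^α·A^δ as internal direct sums of K-subspaces, where A^δ := ∩_i A^{δ_i}, α runs over all tuples in {0,1,…,p-1}^n, and x^α denotes the ordered product x_1^{α_1}·x_2^{α_2}·⋯·x_n^{α_n}. -/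
/-!
For a single Leibniz map `d` with `d x = 1` and `d ^ p = 0`, applying `d ^ m` to
`∑_{k ≤ m} c_k x^k` with `d c_k = 0` kills every term but `m! • c_m`. As `m!` is a unit for
`m < p`, this gives uniqueness of such expansions, and splitting off `((m!)⁻¹ • d ^ m a) x^m`
gives existence, by induction on `m` with `d ^ m a = 0`.

Several variables are handled by induction on `n`: expand `a` in `x 1, …, x (n-1)`, with
coefficients in the joint kernel of `δ 1, …, δ (n-1)`; that kernel is stable under `δ 0` and under
right multiplication by `x 0`, so each coefficient can in turn be expanded in `x 0` inside it.
The decomposition with the coefficients on the right is the one above in `Aᵐᵒᵖ`, with the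
variables in reverse order.
-/

open LinearMap

theorem iSupIndep_map_of_forall_sum_eq_zero {ι R M N : Type*} [Fintype ι] [Ring R]
    [AddCommGroup M] [Module R M] [AddCommGroup N] [Module R N] (B : Submodule R M)
    (f : ι → M →ₗ[R] N) (h : ∀ c : ι → M, (∀ i, c i ∈ B) → ∑ i, f i (c i) = 0 → c = 0) :
    iSupIndep fun i => B.map (f i) := by
  classical
  rw [iSupIndep_iff_finsetSum_eq_zero_imp_eq_zero]
  intro s v hv hsum i hi
  have hv' : ∀ j, ∃ b ∈ B, f j b = if j ∈ s then v j else 0 := fun j => by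
    split_ifs with hj
    · exact Submodule.mem_map.1 (hv j hj)
    · exact ⟨0, B.zero_mem, map_zero _⟩
  choose c hcB hc using hv'
  have hc0 := h c hcB (by simp_rw [hc]; rwa [Finset.sum_ite_mem, Finset.univ_inter])
  simpa [hi, hc0] using (hc i).symm

theorem iSup_map_eq_top_of_forall_exists_sum {ι R M N : Type*} [Fintype ι] [Semiring R]
    [AddCommMonoid M] [Module R M] [AddCommMonoid N] [Module R N] (B : Submodule R M)
    (f : ι → M →ₗ[R] N) (h : ∀ a, ∃ c : ι → M, (∀ i, c i ∈ B) ∧ ∑ i, f i (c i) = a) :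
    ⨆ i, B.map (f i) = ⊤ := by
  refine eq_top_iff.2 fun a _ => ?_
  obtain ⟨c, hcB, rfl⟩ := h a
  exact Submodule.sum_mem _ fun i _ =>
    Submodule.mem_iSup_of_mem i (Submodule.mem_map_of_mem (hcB i))

section Leibniz

variable {K A : Type*} [Field K] [Ring A] [Algebra K A]

/-- The Leibniz rule; Mathlib's `Derivation` only covers commutative algebras. -/
def IsLeibniz (d : Module.End K A) : Prop :=
  ∀ a b : A, d (a * b) = d a * b + a * d b

namespace IsLeibniz

variable {d : Module.End K A} (hd : IsLeibniz d)
include hd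

theorem map_one : d 1 = 0 := by
  simpa using hd 1 1

theorem map_mul_eq_zero {a b : A} (ha : d a = 0) (hb : d b = 0) : d (a * b) = 0 := by
  rw [hd, ha, hb, zero_mul, mul_zero, add_zero]

theorem map_pow_eq_zero {a : A} (ha : d a = 0) (k : ℕ) : d (a ^ k) = 0 := by
  induction k with
  | zero => rw [pow_zero, hd.map_one]
  | succ k ih => rw [pow_succ, hd.map_mul_eq_zero ih ha]

theorem map_mul_pow {c x : A} (hc : d c = 0) (hdx : d x = 1) (m : ℕ) :
    d (c * x ^ m) = m • (c * x ^ (m - 1)) := by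
  induction m with
  | zero => simpa using hc
  | succ m ih =>
    rw [pow_succ, ← mul_assoc, hd, ih, hdx, mul_one, smul_mul_assoc, mul_assoc,
      ← pow_succ, succ_nsmul]
    rcases m with _ | m <;> simp

theorem pow_apply_mul_pow {c x : A} (hc : d c = 0) (hdx : d x = 1) (j m : ℕ) :
    (d ^ j) (c * x ^ m) = m.descFactorial j • (c * x ^ (m - j)) := by
  induction j with
  | zero => simp
  | succ j ih =>
    rw [pow_succ', Module.End.mul_apply, ih, map_nsmul, hd.map_mul_pow hc hdx, smul_smul,
      Nat.descFactorial_succ, Nat.sub_sub, mul_comm]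

variable {p : ℕ} [Fact p.Prime] [CharP K p]

theorem eq_zero_of_sum_mul_pow_eq_zero {x : A} (hdx : d x = 1) {m : ℕ} (hm : m ≤ p)
    (c : Fin m → A) (hc : ∀ k, d (c k) = 0) (hsum : ∑ k, c k * x ^ (k : ℕ) = 0) : c = 0 := by
  induction m with
  | zero => exact Subsingleton.elim _ _
  | succ m ih =>
    rw [Fin.sum_univ_castSucc] at hsum
    have hlast : c (Fin.last m) = 0 := by
      have h := congrArg (d ^ m) hsum
      simp only [map_add, map_sum, map_zero, hd.pow_apply_mul_pow (hc _) hdx, Fin.val_castSucc,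
        Fin.val_last, Nat.descFactorial_self, Nat.sub_self, pow_zero, mul_one,
        Nat.descFactorial_eq_zero_iff_lt.mpr (Fin.is_lt _), zero_smul, Finset.sum_const_zero,
        zero_add] at h
      rwa [← Nat.cast_smul_eq_nsmul K,
        ((IsUnit.natCast_factorial_iff_of_charP p).2 (by omega)).smul_eq_zero] at h
    have htail := ih (by omega) (fun k => c k.castSucc) (fun k => hc _)
      (by simpa [hlast] using hsum)
    funext k
    induction k using Fin.lastCases with
    | last => exact hlast
    | cast k => exact congrFun htail k

theorem exists_sum_mul_pow {x : A} (hdx : d x = 1) {M : Submodule K A}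
    (hdM : Set.MapsTo d M M) (hxM : Set.MapsTo (· * x) M M) {m : ℕ} (hm : m ≤ p)
    {a : A} (ha : a ∈ M) (hma : (d ^ m) a = 0) :
    ∃ c : Fin m → A, (∀ k, c k ∈ M ∧ d (c k) = 0) ∧ ∑ k, c k * x ^ (k : ℕ) = a := by
  induction m generalizing a with
  | zero => exact ⟨Fin.elim0, fun k => k.elim0, by simpa using hma.symm⟩
  | succ m ih =>
    set e := ((m.factorial : K))⁻¹ • (d ^ m) a with he
    have heM : e ∈ M := M.smul_mem _ (by rw [Module.End.pow_apply]; exact hdM.iterate m ha)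
    have hde : d e = 0 := by
      rw [he, map_smul, ← Module.End.mul_apply, ← pow_succ', hma, smul_zero]
    have hdme : (d ^ m) (e * x ^ m) = (d ^ m) a := by
      rw [hd.pow_apply_mul_pow hde hdx, Nat.descFactorial_self, Nat.sub_self, pow_zero, mul_one,
        he, ← Nat.cast_smul_eq_nsmul K, smul_smul,
        ((IsUnit.natCast_factorial_iff_of_charP p).2 (by omega)).mul_inv_cancel, one_smul]
    have hexM : e * x ^ m ∈ M := by
      rw [← mul_right_iterate_apply]
      exact hxM.iterate m heM
    obtain ⟨c, hc, hsum⟩ := ih (by omega) (M.sub_mem ha hexM) (by rw [map_sub, hdme, sub_self])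
    refine ⟨Fin.snoc c e, fun k => ?_, ?_⟩
    · induction k using Fin.lastCases <;> simp [hc, heM, hde]
    · simp [Fin.sum_univ_castSucc, hsum]

end IsLeibniz

end Leibniz

section OrderedMonomial

variable {A : Type*} [Monoid A] {n p : ℕ}

def orderedMonomial (x : Fin n → A) (α : Fin n → Fin p) : A :=
  (List.ofFn fun i => x i ^ (α i : ℕ)).prod

theorem orderedMonomial_succ (x : Fin (n + 1) → A) (α : Fin (n + 1) → Fin p) :
    orderedMonomial x α = x 0 ^ (α 0 : ℕ) * orderedMonomial (Fin.tail x) (Fin.tail α) := by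
  simp [orderedMonomial, List.ofFn_succ, Fin.tail]

theorem MulOpposite.op_orderedMonomial (x : Fin n → A) (α : Fin n → Fin p) :
    op (orderedMonomial x α) = orderedMonomial (fun i => op (x i.rev)) (fun i => α i.rev) := by
  simp [orderedMonomial, op_list_prod, List.ofFn_eq_map, List.map_map, ← List.map_reverse,
    List.finRange_reverse, Function.comp_def]

theorem Fin.sum_univ_pi_succ {β M : Type*} [Fintype β] [AddCommMonoid M]
    (f : (Fin (n + 1) → β) → M) : ∑ α, f α = ∑ t, ∑ k, f (Fin.cons k t) := by
  rw [← (Fin.consEquiv fun _ => β).sum_comp, Fintype.sum_prod_type, Finset.sum_comm]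
  rfl

theorem Fin.sum_univ_pi_rev {β M : Type*} [Fintype β] [AddCommMonoid M]
    (f : (Fin n → β) → M) : ∑ α : Fin n → β, f (fun i => α i.rev) = ∑ α, f α :=
  Fintype.sum_bijective (fun α i => α i.rev)
    (Function.Involutive.bijective fun α => by simp) _ _ fun _ => rfl

end OrderedMonomial

section Expansion

variable {K A : Type*} [Field K] [Ring A] [Algebra K A] {p : ℕ} [Fact p.Prime] [CharP K p]
  {n : ℕ} {δ : Fin n → Module.End K A} {x : Fin n → A}

theorem eq_zero_of_sum_mul_orderedMonomial_eq_zero (hd : ∀ i, IsLeibniz (δ i))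
    (hx : ∀ i j, δ i (x j) = if i = j then 1 else 0)
    (c : (Fin n → Fin p) → A) (hc : ∀ α i, δ i (c α) = 0)
    (hsum : ∑ α, c α * orderedMonomial x α = 0) : c = 0 := by
  induction n with
  | zero =>
    funext α
    rw [Fintype.sum_subsingleton _ α] at hsum
    simpa [orderedMonomial] using hsum
  | succ n ih =>
    rw [Fin.sum_univ_pi_succ] at hsum
    simp only [orderedMonomial_succ, Fin.tail_cons, Fin.cons_zero, ← mul_assoc,
      ← Finset.sum_mul] at hsum
    have hinner := ih (fun i => hd i.succ) (x := Fin.tail x) (fun i j => by simp [Fin.tail, hx])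
      _ (fun t i => by
        rw [map_sum]
        exact Finset.sum_eq_zero fun k _ => (hd i.succ).map_mul_eq_zero (hc _ _)
          ((hd i.succ).map_pow_eq_zero (by simp [hx, Fin.succ_ne_zero]) _)) hsum
    funext α
    have h := (hd 0).eq_zero_of_sum_mul_pow_eq_zero (by simp [hx]) le_rfl _ (fun k => hc _ 0)
      (congrFun hinner (Fin.tail α))
    simpa using congrFun h (α 0)

theorem exists_sum_mul_orderedMonomial (hd : ∀ i, IsLeibniz (δ i))
    (hcomm : ∀ i j, Commute (δ i) (δ j)) (hnil : ∀ i, δ i ^ p = 0)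
    (hx : ∀ i j, δ i (x j) = if i = j then 1 else 0) (a : A) :
    ∃ c : (Fin n → Fin p) → A, (∀ α i, δ i (c α) = 0) ∧ ∑ α, c α * orderedMonomial x α = a := by
  induction n generalizing a with
  | zero => exact ⟨fun _ => a, fun _ i => i.elim0, by simp [orderedMonomial]⟩
  | succ n ih =>
    obtain ⟨c, hc, hsum⟩ := ih (fun i => hd i.succ) (fun i j => hcomm i.succ j.succ)
      (fun i => hnil i.succ) (x := Fin.tail x) (fun i j => by simp [Fin.tail, hx]) a
    set M : Submodule K A := ⨅ i : Fin n, ker (δ i.succ) with hM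
    have mem_M : ∀ b, b ∈ M ↔ ∀ i : Fin n, δ i.succ b = 0 := by simp [hM, Submodule.mem_iInf]
    have hdM : Set.MapsTo (δ 0) M M := fun b hb => (mem_M _).2 fun i => by
      rw [← Module.End.mul_apply, ← (hcomm _ _).eq, Module.End.mul_apply, (mem_M b).1 hb i,
        map_zero]
    have hxM : Set.MapsTo (· * x 0) M M := fun b hb => (mem_M _).2 fun i =>
      (hd i.succ).map_mul_eq_zero ((mem_M b).1 hb i) (by simp [hx, Fin.succ_ne_zero])
    choose e he hesum using fun t => (hd 0).exists_sum_mul_pow (by simp [hx]) hdM hxM le_rfl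
      ((mem_M _).2 (hc t)) (by rw [hnil 0]; rfl)
    refine ⟨fun α => e (Fin.tail α) (α 0), fun α i => ?_, ?_⟩
    · induction i using Fin.cases with
      | zero => exact (he _ _).2
      | succ i => exact (mem_M _).1 (he _ _).1 i
    · rw [Fin.sum_univ_pi_succ, ← hsum]
      refine Finset.sum_congr rfl fun t _ => ?_
      simp only [orderedMonomial_succ, Fin.tail_cons, Fin.cons_zero, ← mul_assoc,
        ← Finset.sum_mul, hesum]

section Opposite

open MulOpposite

theorem IsLeibniz.conjRingEquiv_op {d : Module.End K A} (hd : IsLeibniz d) :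
    IsLeibniz ((opLinearEquiv K).conjRingEquiv d) := fun a b => by
  simp [hd _ _, add_comm]

theorem eq_zero_of_sum_orderedMonomial_mul_eq_zero (hd : ∀ i, IsLeibniz (δ i))
    (hx : ∀ i j, δ i (x j) = if i = j then 1 else 0)
    (c : (Fin n → Fin p) → A) (hc : ∀ α i, δ i (c α) = 0)
    (hsum : ∑ α, orderedMonomial x α * c α = 0) : c = 0 := by
  have h := eq_zero_of_sum_mul_orderedMonomial_eq_zero
    (δ := fun i => (opLinearEquiv K).conjRingEquiv (δ i.rev)) (fun i => (hd _).conjRingEquiv_op)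
    (x := fun i => op (x i.rev)) (fun i j => by simp [hx, apply_ite op])
    (fun β => op (c fun i => β i.rev)) (fun β i => by simp [hc]) (by
      rw [← op_zero, ← hsum, Finset.op_sum, ← Fin.sum_univ_pi_rev]
      simp [op_orderedMonomial])
  funext α
  simpa using congrFun h fun i => α i.rev

theorem exists_sum_orderedMonomial_mul (hd : ∀ i, IsLeibniz (δ i))
    (hcomm : ∀ i j, Commute (δ i) (δ j)) (hnil : ∀ i, δ i ^ p = 0)
    (hx : ∀ i j, δ i (x j) = if i = j then 1 else 0) (a : A) :
    ∃ c : (Fin n → Fin p) → A, (∀ α i, δ i (c α) = 0) ∧ ∑ α, orderedMonomial x α * c α = a := by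
  obtain ⟨c, hc, hsum⟩ := exists_sum_mul_orderedMonomial
    (δ := fun i => (opLinearEquiv K).conjRingEquiv (δ i.rev)) (fun i => (hd _).conjRingEquiv_op)
    (fun i j => (hcomm _ _).map _) (fun i => by rw [← map_pow, hnil, map_zero])
    (x := fun i => op (x i.rev)) (fun i j => by simp [hx, apply_ite op]) (op a)
  refine ⟨fun α => unop (c fun i => α i.rev), fun α i => by simpa using hc _ i.rev, ?_⟩
  apply op_injective
  rw [← hsum, Finset.op_sum, ← Fin.sum_univ_pi_rev]
  simp [op_orderedMonomial]

end Opposite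

end Expansion

/-- Suppose `char K = p > 0`, `δ 0, …, δ (n-1)` are pairwise commuting
`K`-derivations of `A` with `(δ i)^p = 0`, and `x 0, …, x (n-1) ∈ A` satisfy
`δ i (x j) = δ_{ij}` (Kronecker delta).  Then, with `A^δ := ∩ᵢ ker (δ i)` and
`x^α := (x 0)^{α 0} ⋯ (x (n-1))^{α (n-1)}` (ordered product),
`A = ⊕_{α ∈ {0,…,p-1}^n} A^δ·x^α = ⊕_{α} x^α·A^δ` as internal direct sums of
`K`-subspaces. -/
theorem stmt_10 {K A : Type*} [Field K] [Ring A] [Algebra K A]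
    (p : ℕ) (hp : p.Prime) (hcharK : CharP K p)
    (n : ℕ) (δ : Fin n → Module.End K A)
    (hleib : ∀ i, ∀ a b : A, δ i (a * b) = δ i a * b + a * δ i b)
    (hcomm : ∀ i j, Commute (δ i) (δ j))
    (hnil : ∀ i, (δ i) ^ p = 0)
    (x : Fin n → A)
    (hx : ∀ i j, δ i (x j) = if i = j then 1 else 0) :
    iSupIndep (fun α : Fin n → Fin p =>
      (⨅ i, ker (δ i)).map
        (mulRight K ((List.ofFn fun i => x i ^ ((α i : ℕ))).prod))) ∧
    (⨆ α : Fin n → Fin p,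
      (⨅ i, ker (δ i)).map
        (mulRight K ((List.ofFn fun i => x i ^ ((α i : ℕ))).prod))) = ⊤ ∧
    iSupIndep (fun α : Fin n → Fin p =>
      (⨅ i, ker (δ i)).map
        (mulLeft K ((List.ofFn fun i => x i ^ ((α i : ℕ))).prod))) ∧
    (⨆ α : Fin n → Fin p,
      (⨅ i, ker (δ i)).map
        (mulLeft K ((List.ofFn fun i => x i ^ ((α i : ℕ))).prod))) = ⊤ := by
  have : Fact p.Prime := ⟨hp⟩
  have mem_B : ∀ c : (Fin n → Fin p) → A,
      (∀ α, c α ∈ ⨅ i, ker (δ i)) ↔ ∀ α i, δ i (c α) = 0 := by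
    simp [Submodule.mem_iInf]
  refine ⟨iSupIndep_map_of_forall_sum_eq_zero _ _ fun c hc =>
      eq_zero_of_sum_mul_orderedMonomial_eq_zero hleib hx c ((mem_B c).1 hc),
    iSup_map_eq_top_of_forall_exists_sum _ _ fun a => ?_,
    iSupIndep_map_of_forall_sum_eq_zero _ _ fun c hc =>
      eq_zero_of_sum_orderedMonomial_mul_eq_zero hleib hx c ((mem_B c).1 hc),
    iSup_map_eq_top_of_forall_exists_sum _ _ fun a => ?_⟩
  · obtain ⟨c, hc, hsum⟩ := exists_sum_mul_orderedMonomial hleib hcomm hnil hx a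
    exact ⟨c, (mem_B c).2 hc, hsum⟩
  · obtain ⟨c, hc, hsum⟩ := exists_sum_orderedMonomial_mul hleib hcomm hnil hx a
    exact ⟨c, (mem_B c).2 hc, hsum⟩
end

section
/- Let δ_1, …, δ_n be pairwise commuting locally nilpotent K-derivations of A, and for each i let (x_i^[j])_{0≤j<l_i} be an iterative δ_i-descent of maximal length l_i whose members all lie in ∩_{k≠i} A^{δ_k}; set A^δ := ∩_i A^{δ_i}, E := {α ∈ ℕ^n : α_i < l_i}, x^[α] := x_1^[α_1]⋯x_n^[α_n]. Let σ be a K-algebra automorphism of A with σ(A^δ) = A^δ, and let σ_δ denote the automorphism of A^δ obtained by restriction. Put δ_i' := σ∘δ_i∘σ^{-1}, x_i'^[j] := σ(x_i^[j]), φ_i'(a) := Σ_{0≤j<l_i} (-1)^j x_i'^[j]·(δ_i')^j(a), ψ_i'(a) := Σ_{0≤j<l_i} (-1)^j (δ_i')^j(a)·x_i'^[j], φ_σ := φ_n'∘⋯∘φ_1', ψ_σ := ψ_1'∘⋯∘ψ_n', and δ'^α := (δ_1')^{α_1}∘⋯∘(δ_n')^{α_n}. Then for every a ∈ A: σ^{-1}(a)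 = Σ_{α∈E} x^[α]·σ_δ^{-1}(φ_σ(δ'^α(a))) = Σ_{α∈E} σ_δ^{-1}(ψ_σ(δ'^α(a)))·x^[α]. -/
/-!
For one locally nilpotent derivation `d` with a descent `x` of maximal length,
`∑ₖ x k · φ(dᵏ a) = a` where `φ b = ∑ⱼ (-1)ʲ x j · dʲ b`: since `x k · x j = C(k+j, k) · x (k+j)`,
the coefficient of `x m · dᵐ a` is `∑_{j+k=m} (-1)ʲ C(m, k) = [m = 0]`, and `dᵐ = 0` once `m`
reaches the length. For several commuting derivations, `φ_j` commutes with `δ_i` (`i ≠ j`) because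
`x_j` lies in the kernel of `δ_i`, so induction on `n` peels off one derivation at a time; `ψ` is
the mirror image. Finally `σ⁻¹` intertwines `δ'_i, φ'_i, ψ'_i` with `δ_i, φ_i, ψ_i`, so both
identities are the expansion of `σ⁻¹ a` in the original system.
-/

section

open Finset Function

variable {A : Type*} [Ring A]

theorem finsum_eq_sum_range_of_eq_zero {M : Type*} [AddCommMonoid M] {f : ℕ → M} {N : ℕ}
    (h : ∀ k, N ≤ k → f k = 0) : ∑ᶠ k, f k = ∑ k ∈ Finset.range N, f k :=
  finsum_eq_sum_of_support_subset f fun k hk =>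
    Finset.mem_coe.mpr <| mem_range.mpr <| not_le.mp fun hNk => hk (h k hNk)

theorem hasFiniteSupport_of_eq_zero {M : Type*} [AddCommMonoid M] {f : ℕ → M} {N : ℕ}
    (h : ∀ k, N ≤ k → f k = 0) : HasFiniteSupport f :=
  (Set.finite_Iio N).subset fun k hk => not_le.mp fun hNk => hk (h k hNk)

theorem finsum_subtype_eq_finsum {α M : Type*} [AddCommMonoid M] {p : α → Prop} {f : α → M}
    (h : ∀ a, ¬ p a → f a = 0) : ∑ᶠ a : Subtype p, f a = ∑ᶠ a, f a := by
  refine (finsum_set_coe_eq_finsum_mem {a | p a}).trans ?_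
  rw [finsum_mem_def, (Set.indicator_eq_self (s := {a | p a})).mpr
    fun a ha => not_not.mp fun hp => ha (h a hp)]

section Folds

variable {α β : Type*} {n : ℕ}

theorem Function.Semiconj.foldr_ofFn {g : α → β} {f : Fin n → α → α} {f' : Fin n → β → β}
    (h : ∀ i, Semiconj g (f i) (f' i)) :
    Semiconj g (fun a => (List.ofFn f).foldr (fun h b => h b) a)
      (fun b => (List.ofFn f').foldr (fun h b => h b) b) := by
  induction n with
  | zero => exact fun _ => rfl
  | succ n ih =>
    simp only [List.ofFn_succ, List.foldr_cons]
    exact (h 0).comp_right (ih fun i => h i.succ)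

theorem Function.Semiconj.foldl_ofFn {g : α → β} {f : Fin n → α → α} {f' : Fin n → β → β}
    (h : ∀ i, Semiconj g (f i) (f' i)) :
    Semiconj g (fun a => (List.ofFn f).foldl (fun b h => h b) a)
      (fun b => (List.ofFn f').foldl (fun b h => h b) b) := by
  induction n with
  | zero => exact fun _ => rfl
  | succ n ih =>
    simp only [List.ofFn_succ, List.foldl_cons]
    exact (ih fun i => h i.succ).comp_right (h 0)

theorem Function.IsFixedPt.foldr_ofFn {f : Fin n → α → α} {x : α} (h : ∀ i, IsFixedPt (f i) x) :
    IsFixedPt (fun a => (List.ofFn f).foldr (fun h b => h b) a) x := by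
  induction n with
  | zero => rfl
  | succ n ih =>
    simp only [List.ofFn_succ, List.foldr_cons]
    exact (h 0).comp (ih fun i => h i.succ)

theorem Function.IsFixedPt.foldl_ofFn {f : Fin n → α → α} {x : α} (h : ∀ i, IsFixedPt (f i) x) :
    IsFixedPt (fun a => (List.ofFn f).foldl (fun b h => h b) a) x := by
  induction n with
  | zero => rfl
  | succ n ih =>
    simp only [List.ofFn_succ, List.foldl_cons]
    exact (ih fun i => h i.succ).comp (h 0)

variable {M ι : Type*} [AddCommMonoid M]

theorem finsum_eq_finsum_finsum_cons {f : (Fin (n + 1) → ι) → M} (hf : HasFiniteSupport f) :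
    ∑ᶠ α, f α = ∑ᶠ (k) (β), f (Fin.cons k β) := by
  rw [← finsum_comp_equiv (Fin.consEquiv fun _ => ι)]
  exact finsum_curry _ (hf.comp_of_injective (Equiv.injective _))

theorem finsum_eq_finsum_finsum_cons' {f : (Fin (n + 1) → ι) → M} (hf : HasFiniteSupport f) :
    ∑ᶠ α, f α = ∑ᶠ (β) (k), f (Fin.cons k β) := by
  rw [← finsum_comp_equiv ((Equiv.prodComm _ _).trans (Fin.consEquiv fun _ => ι))]
  exact finsum_curry _ (hf.comp_of_injective (Equiv.injective _))

end Folds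

theorem AddMonoidHom.iterate_eq_zero_of_le {d : A →+ A} {b : A} {N j : ℕ} (hN : d^[N] b = 0)
    (hj : N ≤ j) : d^[j] b = 0 := by
  rw [← Nat.sub_add_cancel hj, iterate_add_apply, hN, iterate_map_zero]

theorem Module.End.iterate_eq_zero_of_le {R M : Type*} [Semiring R] [AddCommMonoid M]
    [Module R M] {f : Module.End R M} {l : ℕ∞} (hf : l = ⊤ ∨ ∃ m : ℕ, l = m ∧ f ^ m = 0)
    {j : ℕ} (hj : l ≤ j) (a : M) : f^[j] a = 0 := by
  obtain ⟨m, rfl, hm⟩ := hf.resolve_left fun h => by simp [h] at hj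
  rw [← Module.End.pow_apply, pow_eq_zero_of_le (Nat.cast_le.mp hj) hm, LinearMap.zero_apply]

section SingleDerivation

variable (d : A →+ A) (y : ℕ → A)

/-- The paper's `φ` (and below `ψ`), summed over all of `ℕ`: the terms with `j` at least the
length of the descent vanish, as `dʲ = 0` there. -/
noncomputable def descentPhi (b : A) : A := ∑ᶠ j : ℕ, (-1 : ℤ) ^ j • (y j * d^[j] b)

noncomputable def descentPsi (b : A) : A := ∑ᶠ j : ℕ, (-1 : ℤ) ^ j • (d^[j] b * y j)

variable {d}

theorem descentPhi_eq_sum {b : A} {N : ℕ} (hN : d^[N] b = 0) :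
    descentPhi d y b = ∑ j ∈ Finset.range N, (-1 : ℤ) ^ j • (y j * d^[j] b) :=
  finsum_eq_sum_range_of_eq_zero fun j hj => by simp [AddMonoidHom.iterate_eq_zero_of_le hN hj]

theorem descentPsi_eq_sum {b : A} {N : ℕ} (hN : d^[N] b = 0) :
    descentPsi d y b = ∑ j ∈ Finset.range N, (-1 : ℤ) ^ j • (d^[j] b * y j) :=
  finsum_eq_sum_range_of_eq_zero fun j hj => by simp [AddMonoidHom.iterate_eq_zero_of_le hN hj]

theorem descentPhi_zero : descentPhi d y 0 = 0 := by
  simpa using descentPhi_eq_sum y (N := 0) rfl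

theorem descentPsi_zero : descentPsi d y 0 = 0 := by
  simpa using descentPsi_eq_sum y (N := 0) rfl

theorem hasFiniteSupport_descentPsi_iterate_mul {a : A} {N : ℕ} (hN : d^[N] a = 0) :
    HasFiniteSupport fun k => descentPsi d y (d^[k] a) * y k :=
  hasFiniteSupport_of_eq_zero fun k hk => by
    rw [AddMonoidHom.iterate_eq_zero_of_le hN hk, descentPsi_zero, zero_mul]

theorem map_descentPhi {e : A →+ A} (hcomm : Function.Commute e d)
    (hleib : ∀ a b, e (a * b) = e a * b + a * e b) (l : ℕ∞)
    (hey : ∀ j : ℕ, (j : ℕ∞) < l → e (y j) = 0) (hnil : ∀ j : ℕ, l ≤ j → ∀ b, d^[j] b = 0)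
    {b : A} {N : ℕ} (hN : d^[N] b = 0) :
    e (descentPhi d y b) = descentPhi d y (e b) := by
  have hN' : d^[N] (e b) = 0 := by rw [← (hcomm.iterate_right N).eq, hN, map_zero]
  rw [descentPhi_eq_sum y hN, descentPhi_eq_sum y hN', map_sum]
  refine sum_congr rfl fun j _ => ?_
  rw [map_zsmul, hleib, (hcomm.iterate_right j).eq]
  rcases lt_or_ge (j : ℕ∞) l with hj | hj
  · rw [hey j hj, zero_mul, zero_add]
  · rw [hnil j hj, hnil j hj, mul_zero, mul_zero, add_zero]

theorem map_descentPsi {e : A →+ A} (hcomm : Function.Commute e d)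
    (hleib : ∀ a b, e (a * b) = e a * b + a * e b) (l : ℕ∞)
    (hey : ∀ j : ℕ, (j : ℕ∞) < l → e (y j) = 0) (hnil : ∀ j : ℕ, l ≤ j → ∀ b, d^[j] b = 0)
    {b : A} {N : ℕ} (hN : d^[N] b = 0) :
    e (descentPsi d y b) = descentPsi d y (e b) := by
  have hN' : d^[N] (e b) = 0 := by rw [← (hcomm.iterate_right N).eq, hN, map_zero]
  rw [descentPsi_eq_sum y hN, descentPsi_eq_sum y hN', map_sum]
  refine sum_congr rfl fun j _ => ?_
  rw [map_zsmul, hleib, (hcomm.iterate_right j).eq]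
  rcases lt_or_ge (j : ℕ∞) l with hj | hj
  · rw [hey j hj, mul_zero, add_zero]
  · rw [hnil j hj, hnil j hj, zero_mul, zero_mul, zero_add]

theorem semiconj_descentPhi (σ : A ≃+* A) {d' : A → A} (hd' : Semiconj σ.symm d' d) (l : ℕ∞)
    (hnil : ∀ j : ℕ, l ≤ j → ∀ b, d^[j] b = 0) :
    Semiconj σ.symm
      (fun b => ∑ᶠ j : {j : ℕ // (j : ℕ∞) < l}, (-1 : A) ^ (j : ℕ) * (σ (y j) * d'^[j] b))
      (descentPhi d y) := fun b => by
  have hd'j : ∀ j c, σ.symm (d'^[j] c) = d^[j] (σ.symm c) := fun j => (hd'.iterate_right j).eq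
  simp only [AddEquivClass.map_finsum, map_mul, map_pow, map_neg, map_one,
    RingEquiv.symm_apply_apply, hd'j]
  rw [finsum_subtype_eq_finsum (f := fun j => (-1 : A) ^ j * (y j * d^[j] (σ.symm b)))
    fun j hj => by rw [hnil j (not_lt.mp hj), mul_zero, mul_zero]]
  exact finsum_congr fun j => by simp [zsmul_eq_mul]

theorem semiconj_descentPsi (σ : A ≃+* A) {d' : A → A} (hd' : Semiconj σ.symm d' d) (l : ℕ∞)
    (hnil : ∀ j : ℕ, l ≤ j → ∀ b, d^[j] b = 0) :
    Semiconj σ.symm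
      (fun b => ∑ᶠ j : {j : ℕ // (j : ℕ∞) < l}, (-1 : A) ^ (j : ℕ) * (d'^[j] b * σ (y j)))
      (descentPsi d y) := fun b => by
  have hd'j : ∀ j c, σ.symm (d'^[j] c) = d^[j] (σ.symm c) := fun j => (hd'.iterate_right j).eq
  simp only [AddEquivClass.map_finsum, map_mul, map_pow, map_neg, map_one,
    RingEquiv.symm_apply_apply, hd'j]
  rw [finsum_subtype_eq_finsum (f := fun j => (-1 : A) ^ j * (d^[j] (σ.symm b) * y j))
    fun j hj => by rw [hnil j (not_lt.mp hj), zero_mul, mul_zero]]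
  exact finsum_congr fun j => by simp [zsmul_eq_mul]

structure IsDividedPowerSeq (y : ℕ → A) (l : ℕ∞) : Prop where
  zero : y 0 = 1
  mul : ∀ j k : ℕ, ((j + k : ℕ) : ℕ∞) < l → y j * y k = (j + k).choose j • y (j + k)

namespace IsDividedPowerSeq

variable {y} {l : ℕ∞} (hy : IsDividedPowerSeq y l)
include hy

theorem commute {j k : ℕ} (h : ((j + k : ℕ) : ℕ∞) < l) : Commute (y j) (y k) := by
  rw [commute_iff_eq, hy.mul j k h, hy.mul k j (by rwa [add_comm]), add_comm, Nat.choose_symm_add]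

/-- The degree-`m` part of `exp(y t) · exp(-y t) = 1` for the divided-power exponential. -/
theorem sum_range_neg_one_pow_smul_mul {m : ℕ} (hm : (m : ℕ∞) < l) :
    ∑ k ∈ Finset.range (m + 1), (-1 : ℤ) ^ (m - k) • (y k * y (m - k)) =
      if m = 0 then 1 else 0 := by
  have hterm : ∀ k ∈ Finset.range (m + 1),
      (-1 : ℤ) ^ (m - k) • (y k * y (m - k)) = ((-1) ^ (m - k) * m.choose k : ℤ) • y m := by
    intro k hk
    have hkm : k + (m - k) = m := Nat.add_sub_cancel' (mem_range_succ_iff.mp hk)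
    rw [hy.mul k (m - k) (by rwa [hkm]), hkm, mul_smul, natCast_zsmul]
  have hcoeff : ∑ k ∈ Finset.range (m + 1), ((-1) ^ (m - k) * m.choose k : ℤ) =
      if m = 0 then 1 else 0 := by
    rw [← sum_range_reflect, ← Int.alternating_sum_range_choose]
    refine sum_congr rfl fun k hk => ?_
    have hkm := mem_range_succ_iff.mp hk
    rw [Nat.add_sub_cancel, Nat.sub_sub_self hkm, Nat.choose_symm hkm]
  rw [sum_congr rfl hterm, ← sum_smul, hcoeff]
  split_ifs with h
  · rw [one_smul, h, hy.zero]
  · rw [zero_smul]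

theorem sum_range_neg_one_pow_smul_mul' {m : ℕ} (hm : (m : ℕ∞) < l) :
    ∑ k ∈ Finset.range (m + 1), (-1 : ℤ) ^ (m - k) • (y (m - k) * y k) =
      if m = 0 then 1 else 0 := by
  rw [← hy.sum_range_neg_one_pow_smul_mul hm]
  refine sum_congr rfl fun k hk => ?_
  rw [(hy.commute (by rwa [Nat.sub_add_cancel (mem_range_succ_iff.mp hk)])).eq]

variable (hnil : ∀ j : ℕ, l ≤ j → ∀ b, d^[j] b = 0)
include hnil

theorem sum_range_neg_one_pow_smul_mul_mul_iterate (m : ℕ) (a : A) :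
    (∑ k ∈ Finset.range (m + 1), (-1 : ℤ) ^ (m - k) • (y k * y (m - k))) * d^[m] a =
      if m = 0 then a else 0 := by
  rcases lt_or_ge (m : ℕ∞) l with hm | hm
  · rw [hy.sum_range_neg_one_pow_smul_mul hm]
    split_ifs with h <;> simp [h]
  · rw [hnil m hm, mul_zero]
    split_ifs with h
    · subst h; exact (hnil 0 hm a).symm
    · rfl

theorem iterate_mul_sum_range_neg_one_pow_smul_mul (m : ℕ) (a : A) :
    d^[m] a * ∑ k ∈ Finset.range (m + 1), (-1 : ℤ) ^ (m - k) • (y (m - k) * y k) =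
      if m = 0 then a else 0 := by
  rcases lt_or_ge (m : ℕ∞) l with hm | hm
  · rw [hy.sum_range_neg_one_pow_smul_mul' hm]
    split_ifs with h <;> simp [h]
  · rw [hnil m hm, zero_mul]
    split_ifs with h
    · subst h; exact (hnil 0 hm a).symm
    · rfl

theorem sum_mul_descentPhi_iterate {a : A} {N : ℕ} (hN : d^[N] a = 0) :
    ∑ᶠ k, y k * descentPhi d y (d^[k] a) = a := by
  replace hN : d^[N + 1] a = 0 := AddMonoidHom.iterate_eq_zero_of_le hN N.le_succ
  calc ∑ᶠ k, y k * descentPhi d y (d^[k] a)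
      = ∑ k ∈ Finset.range (N + 1), y k * descentPhi d y (d^[k] a) :=
        finsum_eq_sum_range_of_eq_zero fun k hk => by
          rw [AddMonoidHom.iterate_eq_zero_of_le hN hk, descentPhi_zero, mul_zero]
    _ = ∑ k ∈ Finset.range (N + 1), ∑ j ∈ Finset.range (N + 1 - k),
          y k * ((-1 : ℤ) ^ j • (y j * d^[j + k] a)) := by
        refine sum_congr rfl fun k hk => ?_
        rw [descentPhi_eq_sum y (N := N + 1 - k), mul_sum]
        · simp only [iterate_add_apply]
        · rw [← iterate_add_apply, Nat.sub_add_cancel (mem_range.mp hk).le, hN]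
    _ = ∑ m ∈ Finset.range (N + 1), ∑ k ∈ Finset.range (m + 1),
          y k * ((-1 : ℤ) ^ (m - k) • (y (m - k) * d^[m - k + k] a)) :=
        (sum_range_diag_flip _ fun k j => y k * ((-1 : ℤ) ^ j • (y j * d^[j + k] a))).symm
    _ = ∑ m ∈ Finset.range (N + 1), if m = 0 then a else 0 := by
        refine sum_congr rfl fun m _ => ?_
        rw [← hy.sum_range_neg_one_pow_smul_mul_mul_iterate hnil m a, sum_mul]
        refine sum_congr rfl fun k hk => ?_
        rw [Nat.sub_add_cancel (mem_range_succ_iff.mp hk), mul_smul_comm, smul_mul_assoc,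
          mul_assoc]
    _ = a := by simp

theorem sum_descentPsi_iterate_mul {a : A} {N : ℕ} (hN : d^[N] a = 0) :
    ∑ᶠ k, descentPsi d y (d^[k] a) * y k = a := by
  replace hN : d^[N + 1] a = 0 := AddMonoidHom.iterate_eq_zero_of_le hN N.le_succ
  calc ∑ᶠ k, descentPsi d y (d^[k] a) * y k
      = ∑ k ∈ Finset.range (N + 1), descentPsi d y (d^[k] a) * y k :=
        finsum_eq_sum_range_of_eq_zero fun k hk => by
          rw [AddMonoidHom.iterate_eq_zero_of_le hN hk, descentPsi_zero, zero_mul]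
    _ = ∑ k ∈ Finset.range (N + 1), ∑ j ∈ Finset.range (N + 1 - k),
          ((-1 : ℤ) ^ j • (d^[j + k] a * y j)) * y k := by
        refine sum_congr rfl fun k hk => ?_
        rw [descentPsi_eq_sum y (N := N + 1 - k), sum_mul]
        · simp only [iterate_add_apply]
        · rw [← iterate_add_apply, Nat.sub_add_cancel (mem_range.mp hk).le, hN]
    _ = ∑ m ∈ Finset.range (N + 1), ∑ k ∈ Finset.range (m + 1),
          ((-1 : ℤ) ^ (m - k) • (d^[m - k + k] a * y (m - k))) * y k :=
        (sum_range_diag_flip _ fun k j => ((-1 : ℤ) ^ j • (d^[j + k] a * y j)) * y k).symm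
    _ = ∑ m ∈ Finset.range (N + 1), if m = 0 then a else 0 := by
        refine sum_congr rfl fun m _ => ?_
        rw [← hy.iterate_mul_sum_range_neg_one_pow_smul_mul hnil m a, mul_sum]
        refine sum_congr rfl fun k hk => ?_
        rw [Nat.sub_add_cancel (mem_range_succ_iff.mp hk), smul_mul_assoc, mul_assoc,
          mul_smul_comm]
    _ = a := by simp

end IsDividedPowerSeq

end SingleDerivation

/-- `iterate_eq_zero` encodes the maximality of the length `l i` of the descent `x i`. -/
structure DescentSystem (A : Type*) [Ring A] (n : ℕ) where
  δ : Fin n → A →+ A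
  x : Fin n → ℕ → A
  l : Fin n → ℕ∞
  leibniz : ∀ i a b, δ i (a * b) = δ i a * b + a * δ i b
  commute : ∀ i j, Function.Commute (δ i) (δ j)
  exists_iterate_eq_zero : ∀ i a, ∃ N, (δ i)^[N] a = 0
  isDividedPowerSeq : ∀ i, IsDividedPowerSeq (x i) (l i)
  iterate_eq_zero : ∀ i (j : ℕ), l i ≤ j → ∀ a, (δ i)^[j] a = 0
  map_x : ∀ i k, k ≠ i → ∀ j : ℕ, (j : ℕ∞) < l i → δ k (x i j) = 0

namespace DescentSystem

variable {n : ℕ} (T : DescentSystem A n)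

def iterate (α : Fin n → ℕ) (a : A) : A :=
  (List.ofFn fun i => (T.δ i)^[α i]).foldr (fun f b => f b) a

def monomial (α : Fin n → ℕ) : A := (List.ofFn fun i => T.x i (α i)).prod

noncomputable def phi (a : A) : A :=
  (List.ofFn fun i => descentPhi (T.δ i) (T.x i)).foldl (fun b f => f b) a

noncomputable def psi (a : A) : A :=
  (List.ofFn fun i => descentPsi (T.δ i) (T.x i)).foldr (fun f b => f b) a

def tail (T : DescentSystem A (n + 1)) : DescentSystem A n where
  δ i := T.δ i.succ
  x i := T.x i.succ
  l i := T.l i.succ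
  leibniz i := T.leibniz i.succ
  commute i j := T.commute i.succ j.succ
  exists_iterate_eq_zero i := T.exists_iterate_eq_zero i.succ
  isDividedPowerSeq i := T.isDividedPowerSeq i.succ
  iterate_eq_zero i := T.iterate_eq_zero i.succ
  map_x i k hk := T.map_x i.succ k.succ (Fin.succ_injective n |>.ne hk)

theorem iterate_cons (T : DescentSystem A (n + 1)) (k : ℕ) (β : Fin n → ℕ) (a : A) :
    T.iterate (Fin.cons k β) a = (T.δ 0)^[k] (T.tail.iterate β a) := by
  simp [iterate, List.ofFn_succ, tail]

theorem monomial_cons (T : DescentSystem A (n + 1)) (k : ℕ) (β : Fin n → ℕ) :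
    T.monomial (Fin.cons k β) = T.x 0 k * T.tail.monomial β := by
  simp [monomial, List.ofFn_succ, tail]

theorem phi_succ (T : DescentSystem A (n + 1)) (a : A) :
    T.phi a = T.tail.phi (descentPhi (T.δ 0) (T.x 0) a) := by
  simp [phi, List.ofFn_succ, tail]

theorem psi_succ (T : DescentSystem A (n + 1)) (a : A) :
    T.psi a = descentPsi (T.δ 0) (T.x 0) (T.tail.psi a) := by
  simp [psi, List.ofFn_succ, tail]

theorem iterate_zero (α : Fin n → ℕ) : T.iterate α 0 = 0 :=
  IsFixedPt.foldr_ofFn fun i => iterate_map_zero (T.δ i) (α i)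

theorem phi_zero : T.phi 0 = 0 :=
  IsFixedPt.foldl_ofFn fun _ => descentPhi_zero _

theorem psi_zero : T.psi 0 = 0 :=
  IsFixedPt.foldr_ofFn fun _ => descentPsi_zero _

theorem commute_iterate {g : A → A} (h : ∀ i, Function.Commute g (T.δ i)) (α : Fin n → ℕ) :
    Function.Commute g (T.iterate α) :=
  Semiconj.foldr_ofFn fun i => (h i).iterate_right (α i)

theorem commute_descentPhi {i j : Fin n} (hij : i ≠ j) :
    Function.Commute (T.δ i) (descentPhi (T.δ j) (T.x j)) := fun b => by
  obtain ⟨N, hN⟩ := T.exists_iterate_eq_zero j b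
  exact map_descentPhi _ (T.commute i j) (T.leibniz i) (T.l j) (fun k hk => T.map_x j i hij k hk)
    (T.iterate_eq_zero j) hN

theorem commute_descentPsi {i j : Fin n} (hij : i ≠ j) :
    Function.Commute (T.δ i) (descentPsi (T.δ j) (T.x j)) := fun b => by
  obtain ⟨N, hN⟩ := T.exists_iterate_eq_zero j b
  exact map_descentPsi _ (T.commute i j) (T.leibniz i) (T.l j) (fun k hk => T.map_x j i hij k hk)
    (T.iterate_eq_zero j) hN

theorem iterate_cons' (T : DescentSystem A (n + 1)) (k : ℕ) (β : Fin n → ℕ) (a : A) :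
    T.iterate (Fin.cons k β) a = T.tail.iterate β ((T.δ 0)^[k] a) := by
  rw [iterate_cons, T.tail.commute_iterate (fun j => (T.commute 0 j.succ).iterate_left k) β]

theorem iterate_eq_zero_of_le {α : Fin n → ℕ} {i : Fin n} (h : T.l i ≤ α i) (a : A) :
    T.iterate α a = 0 := by
  induction n with
  | zero => exact i.elim0
  | succ n ih =>
    rw [← Fin.cons_self_tail α, iterate_cons]
    cases i using Fin.cases with
    | zero => exact T.iterate_eq_zero 0 _ h _
    | succ j => rw [ih T.tail (α := Fin.tail α) (i := j) h, iterate_map_zero]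

theorem exists_forall_iterate_eq_zero (a : A) :
    ∃ N, ∀ α i, N ≤ α i → T.iterate α a = 0 := by
  induction n generalizing a with
  | zero => exact ⟨0, fun _ i => i.elim0⟩
  | succ n ih =>
    obtain ⟨N₀, hN₀⟩ := T.exists_iterate_eq_zero 0 a
    choose N hN using fun k => ih T.tail ((T.δ 0)^[k] a)
    refine ⟨N₀ + ∑ k ∈ Finset.range N₀, N k, fun α i hi => ?_⟩
    rw [← Fin.cons_self_tail α, iterate_cons']
    by_cases h₀ : N₀ ≤ α 0
    · rw [AddMonoidHom.iterate_eq_zero_of_le hN₀ h₀, iterate_zero]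
    cases i using Fin.cases with
    | zero => exact absurd (le_of_add_le_left hi) h₀
    | succ j =>
      refine hN _ _ j (le_trans ?_ (le_of_add_le_right hi))
      exact single_le_sum (fun _ _ => Nat.zero_le _) (mem_range.mpr (not_le.mp h₀))

theorem hasFiniteSupport_iterate (a : A) : HasFiniteSupport fun α => T.iterate α a := by
  obtain ⟨N, hN⟩ := T.exists_forall_iterate_eq_zero a
  exact (Set.Finite.pi fun _ => Set.finite_Iio N).subset fun α hα i _ =>
    not_le.mp fun h => hα (hN α i h)

theorem hasFiniteSupport_monomial_mul_phi (a : A) :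
    HasFiniteSupport fun α => T.monomial α * T.phi (T.iterate α a) :=
  ((T.hasFiniteSupport_iterate a).fun_comp T.phi_zero).mul_right _

theorem hasFiniteSupport_psi_mul_monomial (a : A) :
    HasFiniteSupport fun α => T.psi (T.iterate α a) * T.monomial α :=
  ((T.hasFiniteSupport_iterate a).fun_comp T.psi_zero).mul_left _

theorem sum_monomial_mul_phi_iterate (a : A) :
    ∑ᶠ α, T.monomial α * T.phi (T.iterate α a) = a := by
  induction n generalizing a with
  | zero => simp [monomial, phi, iterate, finsum_unique]
  | succ n ih =>
    set φ₀ := descentPhi (T.δ 0) (T.x 0)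
    have hterm : ∀ k, T.x 0 k * φ₀ ((T.δ 0)^[k] a) =
        ∑ᶠ β, T.monomial (Fin.cons k β) * T.phi (T.iterate (Fin.cons k β) a) := by
      intro k
      conv_lhs => rw [← ih T.tail (φ₀ ((T.δ 0)^[k] a))]
      rw [mul_finsum' _ _ (T.tail.hasFiniteSupport_monomial_mul_phi _)]
      refine finsum_congr fun β => ?_
      have hφ₀ : Function.Commute φ₀ (T.tail.iterate β) :=
        T.tail.commute_iterate (fun j => (T.commute_descentPhi (Fin.succ_ne_zero j)).symm) β
      rw [monomial_cons, phi_succ, iterate_cons', ← hφ₀.eq, mul_assoc]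
    obtain ⟨N, hN⟩ := T.exists_iterate_eq_zero 0 a
    calc ∑ᶠ α, T.monomial α * T.phi (T.iterate α a)
        = ∑ᶠ (k) (β), T.monomial (Fin.cons k β) * T.phi (T.iterate (Fin.cons k β) a) :=
          finsum_eq_finsum_finsum_cons (T.hasFiniteSupport_monomial_mul_phi a)
      _ = ∑ᶠ k, T.x 0 k * φ₀ ((T.δ 0)^[k] a) := (finsum_congr hterm).symm
      _ = a := (T.isDividedPowerSeq 0).sum_mul_descentPhi_iterate (T.iterate_eq_zero 0) hN

theorem sum_psi_iterate_mul_monomial (a : A) :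
    ∑ᶠ α, T.psi (T.iterate α a) * T.monomial α = a := by
  induction n generalizing a with
  | zero => simp [monomial, psi, iterate, finsum_unique]
  | succ n ih =>
    have hψ : Function.Commute (T.δ 0) T.tail.psi :=
      Semiconj.foldr_ofFn fun j => T.commute_descentPsi (Fin.succ_ne_zero j).symm
    have hterm : ∀ β, T.tail.psi (T.tail.iterate β a) * T.tail.monomial β =
        ∑ᶠ k, T.psi (T.iterate (Fin.cons k β) a) * T.monomial (Fin.cons k β) := by
      intro β
      obtain ⟨N, hN⟩ := T.exists_iterate_eq_zero 0 (T.tail.psi (T.tail.iterate β a))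
      rw [← (T.isDividedPowerSeq 0).sum_descentPsi_iterate_mul (T.iterate_eq_zero 0) hN,
        finsum_mul' _ _ (hasFiniteSupport_descentPsi_iterate_mul _ hN)]
      refine finsum_congr fun k => ?_
      rw [psi_succ, iterate_cons, monomial_cons, (hψ.iterate_left k).eq, mul_assoc]
    calc ∑ᶠ α, T.psi (T.iterate α a) * T.monomial α
        = ∑ᶠ (β) (k), T.psi (T.iterate (Fin.cons k β) a) * T.monomial (Fin.cons k β) :=
          finsum_eq_finsum_finsum_cons' (T.hasFiniteSupport_psi_mul_monomial a)
      _ = ∑ᶠ β, T.tail.psi (T.tail.iterate β a) * T.tail.monomial β := (finsum_congr hterm).symm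
      _ = a := ih T.tail a

theorem sum_monomial_mul_phi_iterate_of_lt (a : A) :
    ∑ᶠ α : {α : Fin n → ℕ // ∀ i, (α i : ℕ∞) < T.l i},
      T.monomial α * T.phi (T.iterate α a) = a := by
  refine (finsum_subtype_eq_finsum fun α hα => ?_).trans (T.sum_monomial_mul_phi_iterate a)
  obtain ⟨i, hi⟩ := not_forall.mp hα
  rw [T.iterate_eq_zero_of_le (not_lt.mp hi), phi_zero, mul_zero]

theorem sum_psi_iterate_mul_monomial_of_lt (a : A) :
    ∑ᶠ α : {α : Fin n → ℕ // ∀ i, (α i : ℕ∞) < T.l i},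
      T.psi (T.iterate α a) * T.monomial α = a := by
  refine (finsum_subtype_eq_finsum fun α hα => ?_).trans (T.sum_psi_iterate_mul_monomial a)
  obtain ⟨i, hi⟩ := not_forall.mp hα
  rw [T.iterate_eq_zero_of_le (not_lt.mp hi), psi_zero, zero_mul]

end DescentSystem

end

theorem stmt_12_general {K A : Type*} [Field K] [Ring A] [Algebra K A]
    (n : ℕ) (δ : Fin n → Module.End K A)
    (hleib : ∀ i, ∀ a b : A, δ i (a * b) = δ i a * b + a * δ i b)
    (hcomm : ∀ i j, Commute (δ i) (δ j))
    (hln : ∀ i, ∀ a : A, ∃ m : ℕ, ((δ i) ^ m) a = 0)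
    (l : Fin n → ℕ∞)
    (x : Fin n → ℕ → A)
    (hx0 : ∀ i, x i 0 = 1)
    (hiter : ∀ i (j k : ℕ), ((j + k : ℕ) : ℕ∞) < l i →
      x i j * x i k = ((j + k).choose j) • x i (j + k))
    (hmax : ∀ i, (l i = ⊤ ∧ ∀ m : ℕ, (δ i) ^ m ≠ 0) ∨
      (∃ m : ℕ, l i = (m : ℕ∞) ∧ (δ i) ^ m = 0))
    (hmem : ∀ i k, k ≠ i → ∀ j : ℕ, (j : ℕ∞) < l i → δ k (x i j) = 0)
    (σ : A ≃ₐ[K] A)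
    (δ' : Fin n → A → A)
    (hδ' : ∀ i (a : A), δ' i a = σ (δ i (σ.symm a)))
    (φ' ψ' : Fin n → A → A)
    (hφ' : ∀ i (a : A), φ' i a =
      ∑ᶠ j : {j : ℕ // (j : ℕ∞) < l i},
        (-1 : A) ^ (j : ℕ) * (σ (x i (j : ℕ)) * (δ' i)^[(j : ℕ)] a))
    (hψ' : ∀ i (a : A), ψ' i a =
      ∑ᶠ j : {j : ℕ // (j : ℕ∞) < l i},
        (-1 : A) ^ (j : ℕ) * ((δ' i)^[(j : ℕ)] a * σ (x i (j : ℕ))))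
    (Φ' Ψ' : A → A)
    (hΦ' : ∀ a : A, Φ' a = (List.ofFn φ').foldl (fun b f => f b) a)
    (hΨ' : ∀ a : A, Ψ' a = (List.ofFn ψ').foldr (fun f b => f b) a)
    (dα : {α : Fin n → ℕ // ∀ i, ((α i : ℕ∞) < l i)} → A → A)
    (hdα : ∀ α (a : A), dα α a =
      (List.ofFn fun i => (δ' i)^[α.1 i]).foldr (fun f b => f b) a) :
    ∀ a : A,
      σ.symm a = ∑ᶠ α : {α : Fin n → ℕ // ∀ i, ((α i : ℕ∞) < l i)},
        (List.ofFn fun i => x i (α.1 i)).prod * σ.symm (Φ' (dα α a)) ∧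
      σ.symm a = ∑ᶠ α : {α : Fin n → ℕ // ∀ i, ((α i : ℕ∞) < l i)},
        σ.symm (Ψ' (dα α a)) * (List.ofFn fun i => x i (α.1 i)).prod := by
  let T : DescentSystem A n :=
    { δ := fun i => (δ i).toAddMonoidHom
      x := x
      l := l
      leibniz := hleib
      commute := fun i j => LinearMap.congr_fun (hcomm i j).eq
      exists_iterate_eq_zero := fun i a =>
        (hln i a).imp fun m hm => by rwa [Module.End.pow_apply] at hm
      isDividedPowerSeq := fun i => ⟨hx0 i, hiter i⟩
      iterate_eq_zero := fun i _ hj =>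
        Module.End.iterate_eq_zero_of_le ((hmax i).imp_left And.left) hj
      map_x := hmem }
  have hδ : ∀ i, Function.Semiconj σ.symm (δ' i) (T.δ i) := fun i a => by
    rw [hδ', AlgEquiv.symm_apply_apply]; rfl
  have hD : ∀ α, Function.Semiconj σ.symm (dα α) (T.iterate α.1) := fun α a => by
    rw [hdα]; exact Function.Semiconj.foldr_ofFn (fun i => (hδ i).iterate_right _) a
  have hΦ : Function.Semiconj σ.symm Φ' T.phi := fun a => by
    rw [hΦ']
    refine Function.Semiconj.foldl_ofFn (fun i b => ?_) a
    rw [hφ']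
    exact semiconj_descentPhi _ (σ : A ≃+* A) (hδ i) _ (T.iterate_eq_zero i) b
  have hΨ : Function.Semiconj σ.symm Ψ' T.psi := fun a => by
    rw [hΨ']
    refine Function.Semiconj.foldr_ofFn (fun i b => ?_) a
    rw [hψ']
    exact semiconj_descentPsi _ (σ : A ≃+* A) (hδ i) _ (T.iterate_eq_zero i) b
  intro a
  constructor
  · conv_lhs => rw [← T.sum_monomial_mul_phi_iterate_of_lt (σ.symm a)]
    exact finsum_congr fun α => by rw [hΦ, hD]; rfl
  · conv_lhs => rw [← T.sum_psi_iterate_mul_monomial_of_lt (σ.symm a)]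
    exact finsum_congr fun α => by rw [hΨ, hD]; rfl

/-- With commuting locally nilpotent derivations `δ i` and iterative
`δ i`-descents `(x i j)_{j < l i}` of maximal length as in Statements 8–9, let `σ` be a
`K`-algebra automorphism of `A` preserving `A^δ := ∩ᵢ ker (δ i)` (i.e. `σ (A^δ) = A^δ`),
and put `δ' i := σ ∘ δ i ∘ σ⁻¹`, `x' i j := σ (x i j)`,
`φ'ᵢ a := ∑_{j < l i} (-1)^j (x' i j)·(δ' i)^j a`,
`ψ'ᵢ a := ∑_{j < l i} (-1)^j ((δ' i)^j a)·(x' i j)`,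
`Φ' := φ'_{n-1} ∘ ⋯ ∘ φ'_0`, `Ψ' := ψ'_0 ∘ ⋯ ∘ ψ'_{n-1}`, and
`δ'^α := (δ' 0)^{α 0} ∘ ⋯ ∘ (δ' (n-1))^{α (n-1)}`.  Since the values `Φ'(δ'^α a)` and
`Ψ'(δ'^α a)` lie in `A^δ`, the restriction `σ_δ⁻¹` of `σ⁻¹` applies to them, and for every
`a ∈ A`:
`σ⁻¹ a = ∑_{α ∈ E} x^[α]·σ_δ⁻¹(Φ'(δ'^α a)) = ∑_{α ∈ E} σ_δ⁻¹(Ψ'(δ'^α a))·x^[α]`. -/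
theorem stmt_12 {K A : Type*} [Field K] [Ring A] [Algebra K A]
    (n : ℕ) (δ : Fin n → Module.End K A)
    (hleib : ∀ i, ∀ a b : A, δ i (a * b) = δ i a * b + a * δ i b)
    (hcomm : ∀ i j, Commute (δ i) (δ j))
    (hln : ∀ i, ∀ a : A, ∃ m : ℕ, ((δ i) ^ m) a = 0)
    (l : Fin n → ℕ∞) (hl1 : ∀ i, 1 ≤ l i)
    (x : Fin n → ℕ → A)
    (hx0 : ∀ i, x i 0 = 1)
    (hxd : ∀ i (j : ℕ), ((j + 1 : ℕ) : ℕ∞) < l i → δ i (x i (j + 1)) = x i j)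
    (hiter : ∀ i (j k : ℕ), ((j + k : ℕ) : ℕ∞) < l i →
      x i j * x i k = ((j + k).choose j) • x i (j + k))
    (hmax : ∀ i, (l i = ⊤ ∧ ∀ m : ℕ, (δ i) ^ m ≠ 0) ∨
      (∃ m : ℕ, l i = (m : ℕ∞) ∧ (δ i) ^ m = 0))
    (hmem : ∀ i k, k ≠ i → ∀ j : ℕ, (j : ℕ∞) < l i → δ k (x i j) = 0)
    (σ : A ≃ₐ[K] A)
    (hσ : ∀ a : A, (∀ i, δ i a = 0) ↔ (∀ i, δ i (σ a) = 0))
    (δ' : Fin n → A → A)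
    (hδ' : ∀ i (a : A), δ' i a = σ (δ i (σ.symm a)))
    (φ' ψ' : Fin n → A → A)
    (hφ' : ∀ i (a : A), φ' i a =
      ∑ᶠ j : {j : ℕ // (j : ℕ∞) < l i},
        (-1 : A) ^ (j : ℕ) * (σ (x i (j : ℕ)) * (δ' i)^[(j : ℕ)] a))
    (hψ' : ∀ i (a : A), ψ' i a =
      ∑ᶠ j : {j : ℕ // (j : ℕ∞) < l i},
        (-1 : A) ^ (j : ℕ) * ((δ' i)^[(j : ℕ)] a * σ (x i (j : ℕ))))
    (Φ' Ψ' : A → A)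
    (hΦ' : ∀ a : A, Φ' a = (List.ofFn φ').foldl (fun b f => f b) a)
    (hΨ' : ∀ a : A, Ψ' a = (List.ofFn ψ').foldr (fun f b => f b) a)
    (dα : {α : Fin n → ℕ // ∀ i, ((α i : ℕ∞) < l i)} → A → A)
    (hdα : ∀ α (a : A), dα α a =
      (List.ofFn fun i => (δ' i)^[α.1 i]).foldr (fun f b => f b) a) :
    ∀ a : A,
      σ.symm a = ∑ᶠ α : {α : Fin n → ℕ // ∀ i, ((α i : ℕ∞) < l i)},
        (List.ofFn fun i => x i (α.1 i)).prod * σ.symm (Φ' (dα α a)) ∧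
      σ.symm a = ∑ᶠ α : {α : Fin n → ℕ // ∀ i, ((α i : ℕ∞) < l i)},
        σ.symm (Ψ' (dα α a)) * (List.ofFn fun i => x i (α.1 i)).prod :=
  stmt_12_general n δ hleib hcomm hln l x hx0 hiter hmax hmem σ δ' hδ' φ' ψ' hφ' hψ' Φ' Ψ' hΦ' hΨ'
    dα hdα
end

section
/- Let A be a finite-dimensional central simple algebra over a field K with a K-basis e_1 = 1, e_2, …, e_N, and let p_1, …, p_N : A → K be the coordinate functionals (a = Σ_j p_j(a)·e_j for all a ∈ A). Then there exist finite families of elements a_{jν}, b_{jν} ∈ A with p_j(a)·1 = Σ_ν a_{jν}·a·b_{jν} for all a ∈ A, and for any such families and every K-algebra automorphism σ of A and every a ∈ A: σ^{-1}(a) = Σ_{j=1}^N (Σ_ν σ(a_{jν})·a·σ(b_{jν}))·e_j. -/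
/-!
The map `A^ι → End_K(A)`, `f ↦ (x ↦ ∑ i, f i * x * b i)`, is injective whenever `b` is
`K`-linearly independent and `A` is central simple: in a kernel element with minimal support,
simplicity lets one normalise one coefficient to `1`; commutators with that element then have
smaller support, hence vanish, so all coefficients are central, i.e. scalars, and evaluating at
`x = 1` contradicts the independence of `b`. For a basis `b` both sides have dimension `(dim A)²`,
so the map is onto, which produces the families for the coordinate functionals. The formula for
`σ⁻¹` follows by applying `σ` to the identity `p_j(σ⁻¹ z) • 1 = ∑_ν a_{jν} σ⁻¹(z) b_{jν}`.
-/

open Module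

section MulLeftRightSum

variable {K A ι : Type*} [Field K] [Ring A] [Algebra K A] [Fintype ι]

variable (K) in
def mulLeftRightSum (b : ι → A) : (ι → A) →ₗ[K] End K A where
  toFun f := ∑ i, LinearMap.mulLeftRight K (f i, b i)
  map_add' f g := by
    ext x
    simp [LinearMap.mulLeftRight_apply, add_mul, Finset.sum_add_distrib]
  map_smul' c f := by ext x; simp [LinearMap.mulLeftRight_apply, Finset.smul_sum]

@[simp]
lemma mulLeftRightSum_apply (b f : ι → A) (x : A) :
    mulLeftRightSum K b f x = ∑ i, f i * x * b i := by
  simp [mulLeftRightSum, LinearMap.mulLeftRight_apply]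

lemma mulLeftRightSum_mul_left (b f : ι → A) (c x : A) :
    mulLeftRightSum K b (fun i => c * f i) x = c * mulLeftRightSum K b f x := by
  simp [Finset.mul_sum, mul_assoc]

lemma mulLeftRightSum_mul_right (b f : ι → A) (c x : A) :
    mulLeftRightSum K b (fun i => f i * c) x = mulLeftRightSum K b f (c * x) := by
  simp [mul_assoc]

lemma exists_mulLeftRightSum_eq_zero_apply_eq_one [IsSimpleRing A] {b f : ι → A} {s : Finset ι}
    (hf : mulLeftRightSum K b f = 0) (hfs : ∀ i ∉ s, f i = 0) {i₀ : ι} (hi₀ : f i₀ ≠ 0) :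
    ∃ g : ι → A, mulLeftRightSum K b g = 0 ∧ (∀ i ∉ s, g i = 0) ∧ g i₀ = 1 := by
  let I : TwoSidedIdeal A := .mk'
    {y | ∃ g : ι → A, mulLeftRightSum K b g = 0 ∧ (∀ i ∉ s, g i = 0) ∧ g i₀ = y}
    ⟨0, map_zero _, fun _ _ => rfl, rfl⟩
    (by
      rintro _ _ ⟨g, hg, hgs, rfl⟩ ⟨h, hh, hhs, rfl⟩
      exact ⟨g + h, by simp [hg, hh], fun i hi => by simp [hgs i hi, hhs i hi], rfl⟩)
    (by
      rintro _ ⟨g, hg, hgs, rfl⟩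
      exact ⟨-g, by simp [hg], fun i hi => by simp [hgs i hi], rfl⟩)
    (by
      rintro c _ ⟨g, hg, hgs, rfl⟩
      refine ⟨fun i => c * g i, ?_, fun i hi => by simp [hgs i hi], rfl⟩
      ext x
      rw [mulLeftRightSum_mul_left, hg]
      simp)
    (by
      rintro _ c ⟨g, hg, hgs, rfl⟩
      refine ⟨fun i => g i * c, ?_, fun i hi => by simp [hgs i hi], rfl⟩
      ext x
      rw [mulLeftRightSum_mul_right, hg]
      rfl)
  have hI : I = ⊤ := (IsSimpleRing.simple.eq_bot_or_eq_top I).resolve_left fun hI =>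
    hi₀ <| (TwoSidedIdeal.mem_bot A).1 <| hI ▸ (TwoSidedIdeal.mem_mk' ..).2 ⟨f, hf, hfs, rfl⟩
  obtain ⟨g, hg⟩ := (TwoSidedIdeal.mem_mk' ..).1 (hI ▸ TwoSidedIdeal.mem_top A : (1 : A) ∈ I)
  exact ⟨g, hg⟩

lemma eq_zero_of_mulLeftRightSum_eq_zero_of_mem_center (hcenter : Subalgebra.center K A = ⊥)
    {b g : ι → A} (hb : LinearIndependent K b) (hg : mulLeftRightSum K b g = 0)
    (hgc : ∀ i, g i ∈ Subalgebra.center K A) : g = 0 := by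
  simp only [hcenter, Algebra.mem_bot, Set.mem_range] at hgc
  choose k hk using hgc
  have hk0 : ∑ i, k i • b i = 0 := by
    simpa [← hk, Algebra.smul_def] using LinearMap.congr_fun hg 1
  funext i
  simp [← hk, Fintype.linearIndependent_iff.1 hb k hk0 i]

theorem mulLeftRightSum_injective [IsSimpleRing A] (hcenter : Subalgebra.center K A = ⊥)
    {b : ι → A} (hb : LinearIndependent K b) : Function.Injective (mulLeftRightSum K b) := by
  classical
  suffices h : ∀ (s : Finset ι) (f : ι → A), mulLeftRightSum K b f = 0 →
      (∀ i ∉ s, f i = 0) → f = 0 from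
    (injective_iff_map_eq_zero _).2 fun f hf =>
      h Finset.univ f hf fun i hi => (hi (Finset.mem_univ i)).elim
  intro s
  induction s using Finset.strongInduction with
  | H s ih =>
  intro f hf hfs
  by_contra hne
  obtain ⟨i₀, hi₀⟩ := Function.ne_iff.1 hne
  have hi₀s : i₀ ∈ s := by_contra fun h => hi₀ (hfs i₀ h)
  obtain ⟨g, hg, hgs, hg₁⟩ := exists_mulLeftRightSum_eq_zero_apply_eq_one hf hfs hi₀
  -- The commutators `[c, g i]` vanish at `i₀`, so they are killed by the induction hypothesis.
  have hcomm (c : A) : (fun i => c * g i - g i * c) = 0 := by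
    refine ih (s.erase i₀) (Finset.erase_ssubset hi₀s) _ ?_ fun i hi => ?_
    · ext x
      rw [show (fun i => c * g i - g i * c) = (fun i => c * g i) - (fun i => g i * c) from rfl,
        map_sub, LinearMap.sub_apply, mulLeftRightSum_mul_left, mulLeftRightSum_mul_right, hg]
      simp
    · rcases eq_or_ne i i₀ with rfl | hne
      · simp [hg₁]
      · simp [hgs i (fun h => hi (Finset.mem_erase.2 ⟨hne, h⟩))]
  have hg0 := eq_zero_of_mulLeftRightSum_eq_zero_of_mem_center hcenter hb hg fun i =>
    Subalgebra.mem_center_iff.2 fun c => sub_eq_zero.1 (congr_fun (hcomm c) i)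
  simp [hg0] at hg₁

theorem mulLeftRightSum_surjective [IsSimpleRing A] (hcenter : Subalgebra.center K A = ⊥)
    (b : Basis ι K A) : Function.Surjective (mulLeftRightSum K b) := by
  have := Module.Finite.of_basis b
  refine (LinearMap.injective_iff_surjective_of_finrank_eq_finrank ?_).1
    (mulLeftRightSum_injective hcenter b.linearIndependent)
  rw [Module.finrank_linearMap, Module.finrank_pi_fintype, Module.finrank_eq_card_basis b]
  simp

lemma AlgEquiv.symm_apply_eq_sum_mul_basis {κ : Type*} [Fintype κ] (b : Basis ι K A)
    {a c : ι → κ → A} (hac : ∀ j v, b.coord j v • (1 : A) = ∑ ν, a j ν * v * c j ν)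
    (σ : A ≃ₐ[K] A) (z : A) : σ.symm z = ∑ j, (∑ ν, σ (a j ν) * z * σ (c j ν)) * b j := by
  have hσ (j : ι) : ∑ ν, σ (a j ν) * z * σ (c j ν) = b.coord j (σ.symm z) • 1 := by
    simpa using (congr_arg σ (hac j (σ.symm z))).symm
  simp_rw [hσ, smul_mul_assoc, one_mul, Basis.coord_apply, b.sum_repr]

end MulLeftRightSum

theorem stmt_15_general {K A : Type*} [Field K] [Ring A] [Algebra K A]
    [IsSimpleRing A]
    (hcenter : Subalgebra.center K A = ⊥)
    (N : ℕ) (b : Module.Basis (Fin N) K A) :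
    (∃ (M : ℕ) (a c : Fin N → Fin M → A),
      ∀ (j : Fin N) (v : A), (b.coord j v) • (1 : A) = ∑ ν, a j ν * v * c j ν) ∧
    (∀ (M : ℕ) (a c : Fin N → Fin M → A),
      (∀ (j : Fin N) (v : A), (b.coord j v) • (1 : A) = ∑ ν, a j ν * v * c j ν) →
      ∀ (σ : A ≃ₐ[K] A) (z : A),
        σ.symm z = ∑ j, (∑ ν, σ (a j ν) * z * σ (c j ν)) * b j) := by
  refine ⟨?_, fun M a c hac σ z => σ.symm_apply_eq_sum_mul_basis b hac z⟩
  choose f hf using fun j => mulLeftRightSum_surjective hcenter b ((b.coord j).smulRight 1)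
  exact ⟨N, f, fun _ => b, fun j v => by simpa using (LinearMap.congr_fun (hf j) v).symm⟩

/-- Let `A` be a finite-dimensional central simple algebra over a field
`K` with a `K`-basis `b 0 = 1, b 1, …, b (N-1)`, and let `b.coord j` be the coordinate
functionals.  Then there exist finite families `a j ν, c j ν ∈ A` with
`(b.coord j) v • 1 = ∑_ν a j ν * v * c j ν` for all `v ∈ A`, and for any such families,
every `K`-algebra automorphism `σ` of `A` and every `z ∈ A`:
`σ⁻¹ z = ∑ⱼ (∑_ν σ (a j ν) * z * σ (c j ν)) * b j`. -/
theorem stmt_15 {K A : Type*} [Field K] [Ring A] [Algebra K A]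
    [FiniteDimensional K A] [IsSimpleRing A]
    (hcenter : Subalgebra.center K A = ⊥)
    (N : ℕ) (hN : 0 < N) (b : Module.Basis (Fin N) K A) (hb1 : b ⟨0, hN⟩ = 1) :
    (∃ (M : ℕ) (a c : Fin N → Fin M → A),
      ∀ (j : Fin N) (v : A), (b.coord j v) • (1 : A) = ∑ ν, a j ν * v * c j ν) ∧
    (∀ (M : ℕ) (a c : Fin N → Fin M → A),
      (∀ (j : Fin N) (v : A), (b.coord j v) • (1 : A) = ∑ ν, a j ν * v * c j ν) →
      ∀ (σ : A ≃ₐ[K] A) (z : A),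
        σ.symm z = ∑ j, (∑ ν, σ (a j ν) * z * σ (c j ν)) * b j) :=
  stmt_15_general hcenter N b
end

section
/- Let K be a commutative ring in which p·1 = 0 for a prime p (e.g. a field of characteristic p), and for k ≥ 0 define the K-linear operator φ_k on the polynomial ring K[X] by φ_k(u) := Σ_{j=0}^{p-1} (-1)^j · X^{p^k·j} · D^{(p^k·j)}(u), where D^{(m)} is the m-th Hasse derivative. Then for every d ≥ 0: φ_k(X^d) = X^d if the digit of p^k in the base-p expansion of d is 0, and φ_k(X^d) = 0 otherwise. Hence φ_k is a projection of K[X] onto the span of the monomials X^d whose k-th base-p digit vanishes. -/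
/-!
By Lucas's theorem, for `j < p` the binomial coefficient `d.choose (p ^ k * j)` is congruent
mod `p` to `a.choose j`, where `a < p` is the `k`-th base-`p` digit of `d`. Since
`X ^ m * D^{(m)} (X ^ d) = d.choose m • X ^ d`, the operator scales `X ^ d` by the truncated
alternating sum `∑_{j < p} (-1) ^ j * a.choose j`, which is `1` if `a = 0` and `0` otherwise.
A linear map sending each monomial either to itself or to zero is a projection onto the span
of the monomials it fixes.
-/

open Polynomial Finset

theorem Nat.natCast_eq_natCast_of_modEq {R : Type*} [Semiring R] {p a b : ℕ} (hp : (p : R) = 0)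
    (h : a ≡ b [MOD p]) : (a : R) = b := by
  rw [← Nat.mod_add_div a p, ← Nat.mod_add_div b p, h]
  simp [hp]

section Lucas

variable {p : ℕ} [Fact p.Prime]

theorem Nat.choose_pow_mul_modEq_choose_div_pow (n m k : ℕ) :
    n.choose (p ^ k * m) ≡ (n / p ^ k).choose m [MOD p] := by
  induction k generalizing n m with
  | zero => simp [Nat.ModEq.refl]
  | succ k ih =>
    have hlucas (N : ℕ) : N.choose (p * m) ≡ (N / p).choose m [MOD p] := by
      simpa [Nat.pos_of_neZero p] using Choose.choose_modEq_choose_mod_mul_choose_div_nat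
        (p := p) (n := N) (k := p * m)
    rw [pow_succ, mul_assoc, ← Nat.div_div_eq_div_mul]
    exact (ih n (p * m)).trans (hlucas _)

theorem Nat.choose_pow_mul_modEq_choose_digit (n k : ℕ) {j : ℕ} (hj : j < p) :
    n.choose (p ^ k * j) ≡ (n / p ^ k % p).choose j [MOD p] := by
  refine (Nat.choose_pow_mul_modEq_choose_div_pow n j k).trans ?_
  simpa [Nat.mod_eq_of_lt hj, Nat.div_eq_of_lt hj] using
    Choose.choose_modEq_choose_mod_mul_choose_div_nat (p := p) (n := n / p ^ k) (k := j)

end Lucas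

theorem sum_range_neg_one_pow_mul_choose_of_lt {R : Type*} [Ring R] {a n : ℕ} (h : a < n) :
    ∑ j ∈ range n, (-1 : R) ^ j * (a.choose j : R) = if a = 0 then 1 else 0 := by
  have hInt : ∑ j ∈ range n, (-1 : ℤ) ^ j * (a.choose j : ℤ) = if a = 0 then 1 else 0 := by
    rw [← Int.alternating_sum_range_choose]
    refine (sum_subset (range_subset_range.mpr h) fun j _ hj => ?_).symm
    rw [Nat.choose_eq_zero_of_lt (by simpa using hj), Nat.cast_zero, mul_zero]
  simpa [apply_ite] using congrArg (Int.cast : ℤ → R) hInt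

theorem Polynomial.X_pow_mul_hasseDeriv_X_pow {R : Type*} [Semiring R] (m d : ℕ) :
    (X : R[X]) ^ m * hasseDeriv m (X ^ d) = C (d.choose m : R) * X ^ d := by
  rcases le_or_gt m d with hmd | hdm
  · rw [← monomial_one_right_eq_X_pow d, hasseDeriv_monomial, ← monomial_one_right_eq_X_pow m,
      monomial_mul_monomial, Nat.add_sub_cancel' hmd, C_mul_monomial]
    simp
  · simp [← monomial_one_right_eq_X_pow, Nat.choose_eq_zero_of_lt hdm]

section Projection

variable {R : Type*} [Semiring R]

theorem Polynomial.linearMap_idempotent_of_X_pow (f : R[X] →ₗ[R] R[X]) (P : ℕ → Prop)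
    [DecidablePred P] (hf : ∀ d, f (X ^ d) = if P d then X ^ d else 0) (u : R[X]) :
    f (f u) = f u := by
  suffices f ∘ₗ f = f from LinearMap.congr_fun this u
  refine lhom_ext' fun n => LinearMap.ext_ring ?_
  simp only [LinearMap.comp_apply, monomial_one_right_eq_X_pow, hf]
  split_ifs with h
  · rw [hf, if_pos h]
  · rw [map_zero]

theorem Polynomial.linearMap_mem_span_X_pow_of_X_pow (f : R[X] →ₗ[R] R[X]) (P : ℕ → Prop)
    [DecidablePred P] (hf : ∀ d, f (X ^ d) = if P d then X ^ d else 0) (u : R[X]) :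
    f u ∈ Submodule.span R {v | ∃ d, P d ∧ v = X ^ d} := by
  induction u using Polynomial.induction_on' with
  | add u v hu hv => rw [map_add]; exact Submodule.add_mem _ hu hv
  | monomial n c =>
    rw [← smul_X_eq_monomial, map_smul, hf]
    refine Submodule.smul_mem _ _ ?_
    split_ifs with h
    · exact Submodule.subset_span ⟨n, h, rfl⟩
    · exact Submodule.zero_mem _

end Projection

/-- The operator `φ_k`. -/
noncomputable def Polynomial.digitProjection (R : Type*) [CommRing R] (p k : ℕ) :
    R[X] →ₗ[R] R[X] :=
  ∑ j ∈ range p,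
    (-1 : R) ^ j • LinearMap.mulLeft R (X ^ (p ^ k * j)) ∘ₗ hasseDeriv (p ^ k * j)

namespace Polynomial.digitProjection

variable {R : Type*} [CommRing R] {p : ℕ}

theorem apply (k : ℕ) (u : R[X]) : digitProjection R p k u =
    ∑ j ∈ range p, (-1 : R[X]) ^ j * (X ^ (p ^ k * j) * hasseDeriv (p ^ k * j) u) := by
  simp [digitProjection, LinearMap.sum_apply, smul_eq_C_mul]

theorem apply_X_pow (hp : p.Prime) (hchar : (p : R) = 0) (k d : ℕ) :
    digitProjection R p k (X ^ d) = if d / p ^ k % p = 0 then X ^ d else 0 := by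
  have := Fact.mk hp
  have hterm : ∀ j ∈ range p,
      (-1 : R[X]) ^ j * (X ^ (p ^ k * j) * hasseDeriv (p ^ k * j) (X ^ d)) =
        C ((-1 : R) ^ j * ((d / p ^ k % p).choose j : R)) * X ^ d := by
    intro j hj
    rw [X_pow_mul_hasseDeriv_X_pow, Nat.natCast_eq_natCast_of_modEq hchar
      (Nat.choose_pow_mul_modEq_choose_digit d k (mem_range.mp hj))]
    simp [mul_assoc]
  rw [apply, sum_congr rfl hterm, ← sum_mul, ← map_sum,
    sum_range_neg_one_pow_mul_choose_of_lt (Nat.mod_lt _ hp.pos)]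
  split_ifs <;> simp

end Polynomial.digitProjection

/-- Let `K` be a commutative ring with `p·1 = 0` for a prime `p`, and
for `k ≥ 0` define the `K`-linear operator `φ` on `K[X]` by
`φ u := ∑_{j=0}^{p-1} (-1)^j · X^{p^k·j} · D^{(p^k·j)}(u)`, where `D^{(m)}` is the `m`-th
Hasse derivative.  Then for every `d ≥ 0`: `φ (X^d) = X^d` if the `k`-th base-`p` digit
`(d / p^k) % p` of `d` is `0`, and `φ (X^d) = 0` otherwise.  Hence `φ` is a projection of
`K[X]` onto the span of the monomials `X^d` whose `k`-th base-`p` digit vanishes. -/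
theorem stmt_17 {K : Type*} [CommRing K] (p : ℕ) (hp : p.Prime) (hchar : (p : K) = 0)
    (k : ℕ) (φ : Polynomial K → Polynomial K)
    (hφ : ∀ u : Polynomial K, φ u = ∑ j ∈ Finset.range p,
      (-1 : Polynomial K) ^ j * (X ^ (p ^ k * j) * hasseDeriv (p ^ k * j) u)) :
    (∀ d : ℕ, φ (X ^ d) = if d / p ^ k % p = 0 then (X : Polynomial K) ^ d else 0) ∧
    (∀ u : Polynomial K, φ (φ u) = φ u) ∧
    (∀ u : Polynomial K, φ u ∈ Submodule.span K
      {v : Polynomial K | ∃ d : ℕ, d / p ^ k % p = 0 ∧ v = X ^ d}) := by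
  obtain rfl : φ = digitProjection K p k :=
    funext fun u => (hφ u).trans (digitProjection.apply k u).symm
  have hmono := digitProjection.apply_X_pow hp hchar k
  exact ⟨hmono, linearMap_idempotent_of_X_pow _ _ hmono,
    linearMap_mem_span_X_pow_of_X_pow _ _ hmono⟩
end
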